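/- arXiv:math/0008168 — 3 statements merged into one kernel-verified Lean document; each statement's English description precedes it below -/
import Mathlib

section
/- Let k be a field of characteristic p > 0 and s a positive integer. Let Φ : k[z_1, ..., z_s] → k[z_1, ..., z_s] be the map which applies the Frobenius a ↦ a^p to each coefficient of a polynomial (that is, Φ(Σ a_α z^α) = Σ a_α^p z^α). If I ⊆ k[z_1, ..., z_s] is a non-zero homogeneous ideal with Φ(I) ⊆ I, then I contains a non-zero polynomial all of whose coefficients lie in the prime field 𝔽_p; equivalently, I ∩ 𝔽_p[z_1, ..., z_s] ≠ 0, where 𝔽_p[z_1, ..., z_s] is naturally embedded in k[z_1, ..., z_s]. -/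
/-!
Among the non-zero elements of `I`, take one, `f`, with the fewest monomials, scaled so that
one of its coefficients is `1`. Then `Φ f - f` lies in `I`, and its support is strictly smaller
than that of `f`, since the coefficient `1` is fixed by Frobenius. By minimality `Φ f = f`,
i.e. every coefficient of `f` satisfies `a ^ p = a`, and these are exactly the elements of
the prime field.
-/

open MvPolynomial

namespace MvPolynomial

variable {σ : Type*}

theorem exists_mem_ne_zero_forall_support_ssubset {R : Type*} [CommSemiring R]
    {I : Ideal (MvPolynomial σ R)} (hI : I ≠ ⊥) :
    ∃ f ∈ I, f ≠ 0 ∧ ∀ g ∈ I, g.support ⊂ f.support → g = 0 := by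
  obtain ⟨f₀, hf₀I, hf₀⟩ := Submodule.exists_mem_ne_zero_of_ne_bot hI
  obtain ⟨f, ⟨hfI, hf⟩, hmin⟩ := (InvImage.wf (fun f : MvPolynomial σ R => f.support.card)
    wellFounded_lt).has_min {f | f ∈ I ∧ f ≠ 0} ⟨f₀, hf₀I, hf₀⟩
  refine ⟨f, hfI, hf, fun g hgI hgf => ?_⟩
  by_contra hg
  exact hmin g ⟨hgI, hg⟩ (Finset.card_lt_card hgf)

variable {k : Type*} [Field k]

theorem exists_mem_coeff_eq_one_forall_support_ssubset
    {I : Ideal (MvPolynomial σ k)} (hI : I ≠ ⊥) :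
    ∃ f ∈ I, ∃ m, coeff m f = 1 ∧ ∀ g ∈ I, g.support ⊂ f.support → g = 0 := by
  obtain ⟨f, hfI, hf, hmin⟩ := exists_mem_ne_zero_forall_support_ssubset hI
  obtain ⟨m, hm⟩ := support_nonempty.mpr hf
  have hc : coeff m f ≠ 0 := mem_support_iff.mp hm
  refine ⟨(coeff m f)⁻¹ • f, Submodule.smul_of_tower_mem I _ hfI, m, ?_, ?_⟩
  · rw [coeff_smul, smul_eq_mul, inv_mul_cancel₀ hc]
  · rw [support_smul_eq (inv_ne_zero hc)]
    exact hmin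

theorem exists_mem_ne_zero_forall_coeff_fixed (φ : k →+* k)
    {I : Ideal (MvPolynomial σ k)} (hI : I ≠ ⊥) (hI_map : ∀ f ∈ I, map φ f ∈ I) :
    ∃ f ∈ I, f ≠ 0 ∧ ∀ m, φ (coeff m f) = coeff m f := by
  obtain ⟨f, hfI, m, hfm, hmin⟩ := exists_mem_coeff_eq_one_forall_support_ssubset hI
  have hf : f ≠ 0 := fun h => by simp [h] at hfm
  have hcoeff : ∀ n, coeff n (map φ f - f) = φ (coeff n f) - coeff n f := fun n => by
    rw [coeff_sub, coeff_map]
  have hsub : (map φ f - f).support ⊆ f.support := fun n hn => by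
    rw [mem_support_iff, hcoeff] at hn
    exact mem_support_iff.mpr fun h0 => hn (by rw [h0, map_zero, sub_zero])
  have hm : m ∉ (map φ f - f).support := by
    rw [mem_support_iff, hcoeff, hfm, map_one, sub_self, not_not]
  have hfix : map φ f - f = 0 :=
    hmin _ (Ideal.sub_mem I (hI_map f hfI) hfI)
      ((Finset.ssubset_iff_of_subset hsub).mpr ⟨m, by simp [hfm], hm⟩)
  refine ⟨f, hfI, hf, fun n => sub_eq_zero.mp ?_⟩
  rw [← hcoeff, hfix, coeff_zero]

end MvPolynomial

theorem stmt4_general (k : Type*) [Field k] (p : ℕ) [Fact p.Prime] [CharP k p]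
    (s : ℕ)
    (I : Ideal (MvPolynomial (Fin s) k))
    (hI_ne : I ≠ ⊥)
    (hI_stab : ∀ f ∈ I, MvPolynomial.map (frobenius k p) f ∈ I) :
    ∃ f ∈ I, f ≠ 0 ∧
      ∀ m : Fin s →₀ ℕ, coeff m f ∈ Set.range (ZMod.castHom (dvd_refl p) k) := by
  obtain ⟨f, hfI, hf, hfix⟩ := exists_mem_ne_zero_forall_coeff_fixed _ hI_ne hI_stab
  refine ⟨f, hfI, hf, fun m => ?_⟩
  have hbot : coeff m f ∈ (⊥ : Subfield k) :=
    (Subfield.mem_bot_iff_pow_eq_self k p).mpr (hfix m)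
  rwa [← ZMod.fieldRange_castHom_eq_bot p] at hbot

theorem stmt4 (k : Type*) [Field k] (p : ℕ) [Fact p.Prime] [CharP k p]
    (s : ℕ) (hs : 0 < s)
    (I : Ideal (MvPolynomial (Fin s) k))
    (hI_ne : I ≠ ⊥)
    (hI_hom : ∀ f ∈ I, ∀ n : ℕ, homogeneousComponent n f ∈ I)
    (hI_stab : ∀ f ∈ I, MvPolynomial.map (frobenius k p) f ∈ I) :
    ∃ f ∈ I, f ≠ 0 ∧
      ∀ m : Fin s →₀ ℕ, coeff m f ∈ Set.range (ZMod.castHom (dvd_refl p) k) :=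
  stmt4_general k p s I hI_ne hI_stab
end

section
/- Let k be a field of characteristic p > 0 and s a positive integer. Let Θ : k[z_1, ..., z_s] → k[z_1, ..., z_s] be the unique ring endomorphism satisfying Θ(a) = a^p for all a ∈ k and Θ(z_i) = z_i + z_i^p for each i. If I ⊆ k[z_1, ..., z_s] is a non-zero homogeneous ideal with Θ(I) ⊆ I, then there exists a finite family u_1, ..., u_m of elements, each a non-zero 𝔽_p-linear combination of z_1, ..., z_s, such that the product u_1 u_2 ⋯ u_m lies in I. -/
/-!
STATEMENT 5: Let `k` be a field of characteristic `p > 0` and let `Θ` be the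
(Frobenius-semilinear) ring endomorphism of `k[z_1, ..., z_s]` with `Θ(a) = a^p`
for `a ∈ k` and `Θ(z_i) = z_i + z_i^p`.  If `I` is a non-zero homogeneous ideal
with `Θ(I) ⊆ I`, then a finite product of non-zero 𝔽_p-linear combinations of
the variables lies in `I`.
-/

open MvPolynomial

set_option linter.unusedSectionVars false

section Aux

variable {K : Type*} [Field K] {p : ℕ} [Fact p.Prime] [CharP K p]

lemma stmt5_fixed_mem_range (x : K) (h : x ^ p = x) :
    ∃ c : ZMod p, (ZMod.castHom (dvd_refl p) K) c = x := by
  classical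
  by_contra hc
  push_neg at hc
  have hp2 : 2 ≤ p := (Fact.out : p.Prime).two_le
  set f : Polynomial K := Polynomial.X ^ p - Polynomial.X with hf
  have hdeg : f.natDegree = p := by
    rw [hf]
    have h1 : (Polynomial.X : Polynomial K).natDegree < (Polynomial.X ^ p : Polynomial K).natDegree := by
      simpa [Polynomial.natDegree_X_pow] using (show 1 < p by omega)
    calc (Polynomial.X ^ p - Polynomial.X : Polynomial K).natDegree
        = (Polynomial.X ^ p : Polynomial K).natDegree := Polynomial.natDegree_sub_eq_left_of_natDegree_lt h1
      _ = p := Polynomial.natDegree_X_pow p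
  have hfne : f ≠ 0 := by
    intro h0
    rw [h0] at hdeg
    simp at hdeg; omega
  have hroot : ∀ y : K, y ^ p = y → y ∈ f.roots.toFinset := by
    intro y hy
    rw [Multiset.mem_toFinset, Polynomial.mem_roots hfne]
    simp [hf, Polynomial.IsRoot, hy]
  set S : Finset K := Finset.image (fun c : ZMod p => (ZMod.castHom (dvd_refl p) K) c) Finset.univ with hS
  have hcard : S.card = p := by
    rw [hS, Finset.card_image_of_injective _ (ZMod.castHom (dvd_refl p) K).injective]
    simp [ZMod.card p]
  have hsub : insert x S ⊆ f.roots.toFinset := by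
    intro y hy
    rcases Finset.mem_insert.mp hy with rfl | hy
    · exact hroot y h
    · rw [hS] at hy
      rcases Finset.mem_image.mp hy with ⟨c, _, rfl⟩
      apply hroot
      rw [← map_pow, ZMod.pow_card]
  have hxS : x ∉ S := by
    intro hx
    rw [hS] at hx
    rcases Finset.mem_image.mp hx with ⟨c, _, hcx⟩
    exact hc c hcx
  have hle : p + 1 ≤ f.roots.toFinset.card := by
    calc p + 1 = (insert x S).card := by rw [Finset.card_insert_of_notMem hxS, hcard]
    _ ≤ f.roots.toFinset.card := Finset.card_le_card hsub
  have h2 : (f.roots.toFinset.card : ℕ) ≤ p := by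
    calc f.roots.toFinset.card ≤ Multiset.card f.roots := Multiset.toFinset_card_le _
    _ ≤ f.natDegree := Polynomial.card_roots' f
    _ = p := hdeg
  omega

lemma stmt5_exists_ne_zero_root [IsAlgClosed K] {G : Polynomial K} {e : K} (he : e ≠ 0)
    (hd : Polynomial.derivative G = Polynomial.C e) (hdeg : 2 ≤ G.natDegree) :
    ∃ t : K, t ≠ 0 ∧ Polynomial.eval t G = 0 := by
  classical
  have hGne : G ≠ 0 := fun h0 => by simp [h0] at hdeg
  have hsep : G.Separable := by
    rw [Polynomial.Separable, hd]
    exact ⟨0, Polynomial.C e⁻¹, by simp [← Polynomial.C_mul, inv_mul_cancel₀ he]⟩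
  have hnodup' : G.roots.Nodup := Polynomial.nodup_roots hsep
  have hcard : Multiset.card G.roots = G.natDegree := by
    exact Polynomial.splits_iff_card_roots.mp (IsAlgClosed.splits G)
  have hcard2 : 2 ≤ G.roots.toFinset.card := by
    rw [Multiset.toFinset_card_of_nodup hnodup', hcard]; exact hdeg
  obtain ⟨t, ht, htne⟩ := Finset.exists_mem_ne (by omega : 1 < G.roots.toFinset.card) 0
  refine ⟨t, htne, ?_⟩
  have := Multiset.mem_toFinset.mp ht
  exact (Polynomial.mem_roots hGne).mp this

lemma stmt5_eval_smul {σ : Type*} {g : MvPolynomial σ K} {n : ℕ}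
    (hg : g.IsHomogeneous n) (μ : K) (y : σ → K) :
    eval (μ • y) g = μ ^ n * eval y g := by
  rw [eval_eq, eval_eq, Finset.mul_sum]
  apply Finset.sum_congr rfl
  intro d hd
  have hdeg : d.degree = n := by
    by_contra h
    exact (mem_support_iff.mp hd) (hg.coeff_eq_zero h)
  have key : ∏ i ∈ d.support, (μ • y) i ^ d i = μ ^ n * ∏ i ∈ d.support, y i ^ d i := by
    simp only [Pi.smul_apply, smul_eq_mul, mul_pow, Finset.prod_mul_distrib]
    rw [Finset.prod_pow_eq_pow_sum]
    rw [show (∑ i ∈ d.support, d i) = n from hdeg]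
  rw [key]; ring

lemma stmt5_exists_fixed_vector [IsAlgClosed K] {s : ℕ}
    (A : Submodule K (Fin s → K))
    (hA : ∀ w ∈ A, (fun i => (w i) ^ p) ∈ A)
    (w₀ : Fin s → K) (hw₀A : w₀ ∈ A) (hw₀ : w₀ ≠ 0) :
    ∃ v : Fin s → K, v ∈ A ∧ v ≠ 0 ∧ ∀ i, (v i) ^ p = v i := by
  classical
  have hp2 : 2 ≤ p := (Fact.out : p.Prime).two_le
  have hppos : 0 < p := by omega
  set T : (Fin s → K) → (Fin s → K) := fun w i => (w i) ^ p with hT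
  set g : ℕ → (Fin s → K) := fun n => T^[n] w₀ with hg
  have hgsucc : ∀ n, g (n + 1) = T (g n) := by
    intro n; rw [hg]; simp [Function.iterate_succ_apply']
  have hgA : ∀ n, g n ∈ A := by
    intro n; induction n with
    | zero => exact hw₀A
    | succ n ih => rw [hgsucc]; exact hA _ ih
  have hT0 : ∀ w, T w = 0 → w = 0 := by
    intro w hw
    funext i
    have : (w i) ^ p = 0 := congrFun hw i
    exact pow_eq_zero_iff (by omega) |>.mp this
  have hgne : ∀ n, g n ≠ 0 := by
    intro n; induction n with
    | zero => exact hw₀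
    | succ n ih => rw [hgsucc]; exact fun h => ih (hT0 _ h)
  have hdepex : ∃ n, ¬ LinearIndependent K (fun i : Fin (n + 1) => g i) := by
    refine ⟨s, fun hLI => ?_⟩
    have := hLI.fintype_card_le_finrank
    rw [Module.finrank_pi] at this
    simp [Fintype.card_fin] at this
  have h0LI : LinearIndependent K (fun i : Fin (0 + 1) => g i) := by
    show LinearIndependent K (fun i : Fin 1 => g i)
    exact linearIndependent_unique_iff.mpr (hgne 0)
  have hfind0 : Nat.find hdepex ≠ 0 := by
    intro h
    have := Nat.find_spec hdepex
    rw [h] at this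
    exact this h0LI
  obtain ⟨r, hr⟩ : ∃ r, Nat.find hdepex = r + 1 := ⟨Nat.find hdepex - 1, by omega⟩
  have hLI : LinearIndependent K (fun i : Fin (r + 1) => g i) := by
    have := Nat.find_min hdepex (show r < Nat.find hdepex by omega)
    exact not_not.mp this
  have hnLI : ¬ LinearIndependent K (fun i : Fin (r + 2) => g i) := by
    have := Nat.find_spec hdepex
    rw [hr] at this
    exact this
  have hsnoc : (fun i : Fin (r + 2) => g i) = Fin.snoc (fun i : Fin (r + 1) => g i) (g (r + 1)) := by
    funext i
    refine Fin.lastCases ?_ ?_ i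
    · simp [Fin.snoc_last]
    · intro j; simp [Fin.snoc_castSucc]
  have hmem : g (r + 1) ∈ Submodule.span K (Set.range (fun i : Fin (r + 1) => g i)) := by
    by_contra hnm
    exact hnLI (by rw [hsnoc]; exact linearIndependent_fin_snoc.mpr ⟨hLI, hnm⟩)
  obtain ⟨lam, hlam⟩ := (Submodule.mem_span_range_iff_exists_fun K).mp hmem
  set lam' : ℕ → K := fun n => if h : n < r + 1 then lam ⟨n, h⟩ else 0 with hlam'
  have hlamex : ∃ i : Fin (r + 1), lam i ≠ 0 := by
    by_contra hall
    push_neg at hall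
    apply hgne (r + 1)
    rw [← hlam]
    simp [hall]
  -- the polynomial recursion
  set Q : ℕ → Polynomial K := fun n =>
    Nat.rec (Polynomial.C (lam' 0) * Polynomial.X ^ p)
      (fun i Qi => Qi ^ p + Polynomial.C (lam' (i + 1)) * Polynomial.X ^ p) n with hQ
  have hQ0 : Q 0 = Polynomial.C (lam' 0) * Polynomial.X ^ p := rfl
  have hQs : ∀ i, Q (i + 1) = Q i ^ p + Polynomial.C (lam' (i + 1)) * Polynomial.X ^ p := fun i => rfl
  have hpK : (p : K) = 0 := CharP.cast_eq_zero K p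
  have hQder : ∀ i, Polynomial.derivative (Q i) = 0 := by
    intro i; induction i with
    | zero =>
      rw [hQ0]
      simp [Polynomial.derivative_X_pow, hpK]
    | succ i ih =>
      rw [hQs]
      simp [Polynomial.derivative_pow, Polynomial.derivative_X_pow, hpK, ih]
  have hQcoeff : ∀ i n, ¬ (p ∣ n) → (Q i).coeff n = 0 := by
    intro i
    induction i with
    | zero =>
      intro n hn
      rw [hQ0]
      rw [Polynomial.coeff_C_mul, Polynomial.coeff_X_pow]
      have : n ≠ p := fun h => hn (h ▸ dvd_refl p)
      simp [this]
    | succ i ih =>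
      intro n hn
      rw [hQs, Polynomial.coeff_add]
      have h1 : (Q i ^ p).coeff n = 0 := by
        rw [← Polynomial.map_frobenius_expand p (Q i), Polynomial.coeff_map, Polynomial.coeff_expand hppos]
        simp [hn]
      have h2 : (Polynomial.C (lam' (i + 1)) * Polynomial.X ^ p).coeff n = 0 := by
        rw [Polynomial.coeff_C_mul, Polynomial.coeff_X_pow]
        have : n ≠ p := fun h => hn (h ▸ dvd_refl p)
        simp [this]
      rw [h1, h2, add_zero]
  have hQzero : ∀ i, (∀ j, j ≤ i → lam' j = 0) → Q i = 0 := by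
    intro i
    induction i with
    | zero => intro h; rw [hQ0, h 0 le_rfl]; simp
    | succ i ih =>
      intro h
      rw [hQs, ih (fun j hj => h j (by omega)), h (i+1) le_rfl]
      simp [zero_pow (show p ≠ 0 by omega)]
  have hQdeg : ∀ i, (∃ j, j ≤ i ∧ lam' j ≠ 0) → p ≤ (Q i).natDegree := by
    intro i
    induction i with
    | zero =>
      rintro ⟨j, hj, hne⟩
      interval_cases j
      rw [hQ0, Polynomial.natDegree_C_mul_X_pow p _ hne]
    | succ i ih =>
      rintro ⟨j, hj, hne⟩
      by_cases hcase : ∃ j, j ≤ i ∧ lam' j ≠ 0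
      · have hdegQi := ih hcase
        have hQine : Q i ≠ 0 := by
          intro h0; rw [h0] at hdegQi; simp at hdegQi; omega
        have hdpow : (Q i ^ p).natDegree = p * (Q i).natDegree := Polynomial.natDegree_pow _ _
        have hlt : (Polynomial.C (lam' (i + 1)) * Polynomial.X ^ p).natDegree < (Q i ^ p).natDegree := by
          have hle : (Polynomial.C (lam' (i + 1)) * Polynomial.X ^ p).natDegree ≤ p := by
            refine le_trans (Polynomial.natDegree_mul_le) ?_
            simp [Polynomial.natDegree_X_pow]
          have : p < p * (Q i).natDegree := by nlinarith
          omega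
        rw [hQs, Polynomial.natDegree_add_eq_left_of_natDegree_lt hlt, hdpow]
        nlinarith
      · push_neg at hcase
        have hzero : Q i = 0 := hQzero i (fun j hj => hcase j hj)
        have hj1 : lam' (i + 1) ≠ 0 := by
          rcases Nat.lt_or_ge j (i + 1) with h | h
          · exact absurd (hcase j (by omega)) hne
          · have : j = i + 1 := by omega
            rwa [this] at hne
        rw [hQs, hzero, zero_pow (show p ≠ 0 by omega), zero_add,
          Polynomial.natDegree_C_mul_X_pow p _ hj1]
  -- polynomial P and its nonzero root
  set P : Polynomial K := Q r - Polynomial.X with hP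
  have hQrdeg : p ≤ (Q r).natDegree := by
    obtain ⟨i, hi⟩ := hlamex
    refine hQdeg r ⟨i.1, by omega, ?_⟩
    rw [hlam']
    simpa [i.2] using hi
  have hXlt : (Polynomial.X : Polynomial K).natDegree < (Q r).natDegree := by
    rw [Polynomial.natDegree_X]; omega
  have hPdeg : 2 ≤ P.natDegree := by
    rw [hP, Polynomial.natDegree_sub_eq_left_of_natDegree_lt hXlt]; omega
  have hPder : Polynomial.derivative P = Polynomial.C (-1 : K) := by
    rw [hP, Polynomial.derivative_sub, hQder, Polynomial.derivative_X]
    simp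
  obtain ⟨t₀, ht₀ne, ht₀⟩ := stmt5_exists_ne_zero_root (neg_ne_zero.mpr one_ne_zero) hPder hPdeg
  have hQrt : Polynomial.eval t₀ (Q r) = t₀ := by
    rw [hP] at ht₀
    simpa [sub_eq_zero] using ht₀
  set μ' : ℕ → K := fun i => Polynomial.eval t₀ (Q i) with hμ'
  have hμ0 : μ' 0 = lam' 0 * t₀ ^ p := by rw [hμ']; simp [hQ0]
  have hμs : ∀ i, μ' (i + 1) = μ' i ^ p + lam' (i + 1) * t₀ ^ p := by
    intro i; rw [hμ']; simp [hQs i]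
  have hμr : μ' r = t₀ := hQrt
  -- the lam-relation as a range sum
  have hlamr : ∑ i ∈ Finset.range (r + 1), lam' i • g i = g (r + 1) := by
    rw [← hlam, ← Fin.sum_univ_eq_sum_range (fun i => lam' i • g i) (r + 1)]
    refine Finset.sum_congr rfl fun i _ => ?_
    rw [hlam']
    simp [i.2]
  set v : Fin s → K := ∑ i ∈ Finset.range (r + 1), μ' i • g i with hv
  have hvA : v ∈ A := by
    rw [hv]
    exact Submodule.sum_mem _ (fun i _ => Submodule.smul_mem _ _ (hgA i))
  have hvne : v ≠ 0 := by
    intro h0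
    have hfin : ∑ i : Fin (r + 1), μ' i.1 • g i.1 = 0 := by
      rw [Fin.sum_univ_eq_sum_range (fun i => μ' i • g i) (r + 1)]
      rw [← hv]; exact h0
    have hall := Fintype.linearIndependent_iff.mp hLI (fun i => μ' i.1) hfin
    have := hall ⟨r, by omega⟩
    simp only at this
    rw [hμr] at this
    exact ht₀ne this
  have hkey : ∑ i ∈ Finset.range (r + 1), (μ' i ^ p) • g (i + 1) = v := by
    calc ∑ i ∈ Finset.range (r + 1), (μ' i ^ p) • g (i + 1)
        = ∑ i ∈ Finset.range r, (μ' i ^ p) • g (i + 1) + (μ' r ^ p) • g (r + 1) :=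
          Finset.sum_range_succ _ _
      _ = ∑ i ∈ Finset.range r, (μ' i ^ p) • g (i + 1)
            + ∑ i ∈ Finset.range (r + 1), (t₀ ^ p * lam' i) • g i := by
          rw [hμr, ← hlamr, Finset.smul_sum]
          simp_rw [smul_smul]
      _ = ∑ i ∈ Finset.range r, (μ' i ^ p) • g (i + 1)
            + (∑ i ∈ Finset.range r, (t₀ ^ p * lam' (i + 1)) • g (i + 1)
              + (t₀ ^ p * lam' 0) • g 0) := by
          rw [Finset.sum_range_succ']
      _ = ∑ i ∈ Finset.range r, ((μ' i ^ p) • g (i + 1) + (t₀ ^ p * lam' (i + 1)) • g (i + 1))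
            + (t₀ ^ p * lam' 0) • g 0 := by
          rw [Finset.sum_add_distrib]
          abel
      _ = ∑ i ∈ Finset.range r, μ' (i + 1) • g (i + 1) + μ' 0 • g 0 := by
          congr 1
          · refine Finset.sum_congr rfl fun i _ => ?_
            rw [← add_smul, hμs i, mul_comm (t₀ ^ p) (lam' (i + 1))]
          · rw [hμ0, mul_comm (t₀ ^ p) (lam' 0)]
      _ = v := by
          rw [hv, Finset.sum_range_succ']
  have hfix : ∀ j, (v j) ^ p = v j := by
    intro j
    have h1 : v j = ∑ i ∈ Finset.range (r + 1), μ' i * g i j := by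
      rw [hv, Finset.sum_apply]
      simp
    have h2 : (v j) ^ p = ∑ i ∈ Finset.range (r + 1), (μ' i ^ p) * g (i + 1) j := by
      rw [h1, sum_pow_char]
      refine Finset.sum_congr rfl fun i _ => ?_
      rw [mul_pow]
      congr 1
      have := congrFun (hgsucc i) j
      rw [this]
    rw [h2]
    conv_rhs => rw [← hkey]
    rw [Finset.sum_apply]
    simp
  exact ⟨v, hvA, hvne, hfix⟩

end Aux


section Dyn

variable {k : Type*} [Field k] {p : ℕ} [Fact p.Prime] [CharP k p]
variable {K : Type*} [Field K] [Algebra k K] [CharP K p]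
variable {s : ℕ}

lemma stmt5_cone (I : Ideal (MvPolynomial (Fin s) k))
    (hI_hom : ∀ f ∈ I, ∀ n : ℕ, homogeneousComponent n f ∈ I)
    (x : Fin s → K) (hx : ∀ f ∈ I, eval x (MvPolynomial.map (algebraMap k K) f) = 0) (μ : K) :
    ∀ f ∈ I, eval (μ • x) (MvPolynomial.map (algebraMap k K) f) = 0 := by
  intro f hf
  have hmap : MvPolynomial.map (algebraMap k K) f
      = ∑ n ∈ Finset.range (f.totalDegree + 1),
          MvPolynomial.map (algebraMap k K) (homogeneousComponent n f) := by
    rw [← map_sum, sum_homogeneousComponent]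
  rw [hmap, map_sum]
  refine Finset.sum_eq_zero fun n _ => ?_
  have hhom : (MvPolynomial.map (algebraMap k K) (homogeneousComponent n f)).IsHomogeneous n := by
    intro d hd
    refine (homogeneousComponent_isHomogeneous n f) ?_
    intro h
    exact hd (by rw [coeff_map, h, map_zero])
  rw [stmt5_eval_smul hhom, hx _ (hI_hom f hf n), mul_zero]

lemma stmt5_psi (σR : K →+* K) (hσ : ∀ y : K, σR y ^ p = y)
    (Θ : MvPolynomial (Fin s) k →+* MvPolynomial (Fin s) k)
    (hΘC : ∀ a : k, Θ (C a) = C (a ^ p))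
    (hΘX : ∀ i : Fin s, Θ (X i) = X i + X i ^ p)
    (I : Ideal (MvPolynomial (Fin s) k))
    (hI_stab : ∀ f ∈ I, Θ f ∈ I)
    (x : Fin s → K) (hx : ∀ f ∈ I, eval x (MvPolynomial.map (algebraMap k K) f) = 0) :
    ∀ f ∈ I, eval (fun i => x i + σR (x i)) (MvPolynomial.map (algebraMap k K) f) = 0 := by
  have hppos : p ≠ 0 := (Fact.out : p.Prime).pos.ne'
  have hcomm : ((eval x : MvPolynomial (Fin s) K →+* K).comp
        ((MvPolynomial.map (algebraMap k K)).comp Θ))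
      = (frobenius K p).comp
        ((eval (fun i => x i + σR (x i)) : MvPolynomial (Fin s) K →+* K).comp
          (MvPolynomial.map (algebraMap k K))) := by
    apply MvPolynomial.ringHom_ext
    · intro a
      simp [hΘC a, frobenius_def, map_pow]
    · intro i
      simp only [RingHom.comp_apply, hΘX i, map_add, map_pow, MvPolynomial.map_X, eval_X,
        frobenius_def]
      rw [hσ (x i)]; ring
  intro f hf
  have h1 : eval x (MvPolynomial.map (algebraMap k K) (Θ f)) = 0 := hx _ (hI_stab f hf)
  have h2 := RingHom.congr_fun hcomm f
  simp only [RingHom.comp_apply] at h2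
  rw [h1] at h2
  have h3 := h2.symm
  rw [frobenius_def] at h3
  exact pow_eq_zero_iff hppos |>.mp h3


set_option maxHeartbeats 1000000 in
lemma stmt5_dyn [IsAlgClosed K] (σR : K →+* K) (hσ : ∀ y : K, σR y ^ p = y)
    (Θ : MvPolynomial (Fin s) k →+* MvPolynomial (Fin s) k)
    (hΘC : ∀ a : k, Θ (C a) = C (a ^ p))
    (hΘX : ∀ i : Fin s, Θ (X i) = X i + X i ^ p)
    (I : Ideal (MvPolynomial (Fin s) k))
    (hI_hom : ∀ f ∈ I, ∀ n : ℕ, homogeneousComponent n f ∈ I)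
    (hI_stab : ∀ f ∈ I, Θ f ∈ I)
    (x : Fin s → K) (hx : ∀ f ∈ I, eval x (MvPolynomial.map (algebraMap k K) f) = 0) :
    ∀ (m : ℕ) (c : ℕ → K) (f : MvPolynomial (Fin s) k), f ∈ I →
      eval (fun i => ∑ j ∈ Finset.range (m + 1), c j * (⇑σR)^[j] (x i))
        (MvPolynomial.map (algebraMap k K) f) = 0 := by
  have hp2 : 2 ≤ p := (Fact.out : p.Prime).two_le
  have hppos : 0 < p := by omega
  have hfrob : Function.Injective fun z : K => z ^ p := by
    intro a b hab
    apply (frobenius K p).injective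
    simpa [frobenius_def] using hab
  have hσp : ∀ y : K, σR (y ^ p) = y := by
    intro y
    exact hfrob (hσ (y ^ p))
  have hiter : ∀ (j : ℕ) (z : K), σR ((⇑σR)^[j] z) = (⇑σR)^[j + 1] z := by
    intro j z
    rw [Function.iterate_succ_apply' σR j z]
  intro m
  induction m with
  | zero =>
    intro c f hf
    have hpt : (fun i => ∑ j ∈ Finset.range 1, c j * (⇑σR)^[j] (x i)) = c 0 • x := by
      funext i; simp
    rw [hpt]
    exact stmt5_cone I hI_hom x hx (c 0) f hf
  | succ m ih =>
    intro c f hf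
    have key : ∀ d : ℕ → K, d 0 ≠ 0 →
        eval (fun i => ∑ j ∈ Finset.range (m + 2), d j * (⇑σR)^[j] (x i))
          (MvPolynomial.map (algebraMap k K) f) = 0 := by
      intro d hd0
      by_cases hlast : d (m + 1) = 0
      · have hpt : (fun i => ∑ j ∈ Finset.range (m + 2), d j * (⇑σR)^[j] (x i))
            = (fun i => ∑ j ∈ Finset.range (m + 1), d j * (⇑σR)^[j] (x i)) := by
          funext i
          rw [Finset.sum_range_succ, hlast]
          simp
        rw [hpt]
        exact ih d f hf
      · -- main construction
        set D : ℕ → Polynomial K := fun l =>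
          Nat.rec ((Polynomial.C (d (m + 1)) * Polynomial.X) ^ p)
            (fun l Dl => (Polynomial.C (d (m - l)) * Polynomial.X - Dl) ^ p) l with hD
        have hD0 : D 0 = (Polynomial.C (d (m + 1)) * Polynomial.X) ^ p := rfl
        have hDs : ∀ l, D (l + 1) = (Polynomial.C (d (m - l)) * Polynomial.X - D l) ^ p :=
          fun l => rfl
        have hpK : ((p : ℕ) : K) = 0 := CharP.cast_eq_zero K p
        have hCXdeg : ∀ a : K, (Polynomial.C a * Polynomial.X).natDegree ≤ 1 := by
          intro a
          refine le_trans (Polynomial.natDegree_mul_le) ?_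
          simp
        have hDdeg : ∀ l, 2 ≤ (D l).natDegree := by
          intro l
          induction l with
          | zero =>
            rw [hD0, Polynomial.natDegree_pow, Polynomial.natDegree_C_mul_X _ hlast]
            omega
          | succ l ihl =>
            rw [hDs, Polynomial.natDegree_pow]
            have hlt : (Polynomial.C (d (m - l)) * Polynomial.X).natDegree < (D l).natDegree := by
              have := hCXdeg (d (m - l)); omega
            rw [Polynomial.natDegree_sub_eq_right_of_natDegree_lt hlt]
            nlinarith
        have hDder : ∀ l, Polynomial.derivative (D l) = 0 := by
          intro l
          cases l with
          | zero => rw [hD0]; simp [Polynomial.derivative_pow, hpK]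
          | succ l => rw [hDs]; simp [Polynomial.derivative_pow, hpK]
        set G : Polynomial K := D m - Polynomial.C (d 0) * Polynomial.X with hG
        have hGdeg : 2 ≤ G.natDegree := by
          rw [hG]
          have hlt : (Polynomial.C (d 0) * Polynomial.X).natDegree < (D m).natDegree := by
            have := hCXdeg (d 0); have := hDdeg m; omega
          rw [Polynomial.natDegree_sub_eq_left_of_natDegree_lt hlt]
          exact hDdeg m
        have hGder : Polynomial.derivative G = Polynomial.C (-(d 0)) := by
          rw [hG, Polynomial.derivative_sub, hDder]
          simp
        obtain ⟨t₀, ht₀ne, ht₀⟩ := stmt5_exists_ne_zero_root (neg_ne_zero.mpr hd0) hGder hGdeg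
        set b : ℕ → K := fun l => Polynomial.eval t₀ (D l) with hb
        have hbm : b m = d 0 * t₀ := by
          have h1 : b m - d 0 * t₀ = 0 := by
            rw [hb]
            simpa [hG] using ht₀
          exact sub_eq_zero.mp h1
        have hσb0 : σR (b 0) = d (m + 1) * t₀ := by
          have h1 : b 0 = (d (m + 1) * t₀) ^ p := by
            simp only [hb, hD0]; simp
          rw [h1, hσp]
        have hσbs : ∀ l, σR (b (l + 1)) = d (m - l) * t₀ - b l := by
          intro l
          have h1 : b (l + 1) = (d (m - l) * t₀ - b l) ^ p := by
            simp only [hb, hDs]; simp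
          rw [h1, hσp]
        set y : Fin s → K := fun i => ∑ j ∈ Finset.range (m + 1), b (m - j) * (⇑σR)^[j] (x i)
          with hy
        have hyV : ∀ f' ∈ I, eval y (MvPolynomial.map (algebraMap k K) f') = 0 :=
          fun f' hf' => ih (fun j => b (m - j)) f' hf'
        have hψV : ∀ f' ∈ I,
            eval (fun i => y i + σR (y i)) (MvPolynomial.map (algebraMap k K) f') = 0 :=
          stmt5_psi σR hσ Θ hΘC hΘX I hI_stab y hyV
        have hfinal := stmt5_cone I hI_hom _ hψV t₀⁻¹ f hf
        have hpt : t₀⁻¹ • (fun i => y i + σR (y i))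
            = fun i => ∑ j ∈ Finset.range (m + 2), d j * (⇑σR)^[j] (x i) := by
          funext i
          have hσy : σR (y i)
              = ∑ j ∈ Finset.range (m + 1), σR (b (m - j)) * (⇑σR)^[j + 1] (x i) := by
            rw [hy]
            simp only
            rw [map_sum]
            refine Finset.sum_congr rfl fun j _ => ?_
            rw [map_mul, hiter]
          have hLHS : y i + σR (y i)
              = ∑ j ∈ Finset.range (m + 2), (d j * t₀) * (⇑σR)^[j] (x i) := by
            rw [hσy]
            rw [Finset.sum_range_succ'
              (fun j => (d j * t₀) * (⇑σR)^[j] (x i)) (m + 1)]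
            rw [Finset.sum_range_succ
              (fun j => (d (j + 1) * t₀) * (⇑σR)^[j + 1] (x i)) m]
            rw [Finset.sum_range_succ
              (fun j => σR (b (m - j)) * (⇑σR)^[j + 1] (x i)) m]
            have hy' : y i = (∑ j ∈ Finset.range m, b (m - (j + 1)) * (⇑σR)^[j + 1] (x i))
                + b m * (⇑σR)^[0] (x i) := by
              rw [hy]
              simp only
              rw [Finset.sum_range_succ' (fun j => b (m - j) * (⇑σR)^[j] (x i)) m]
              simp
            rw [hy']
            have hmid : ∀ j ∈ Finset.range m,
                b (m - (j + 1)) * (⇑σR)^[j + 1] (x i) + σR (b (m - j)) * (⇑σR)^[j + 1] (x i)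
                = (d (j + 1) * t₀) * (⇑σR)^[j + 1] (x i) := by
              intro j hj
              have hjm : j < m := Finset.mem_range.mp hj
              have h1 : m - j = (m - (j + 1)) + 1 := by omega
              have h2 : σR (b (m - j)) = d (j + 1) * t₀ - b (m - (j + 1)) := by
                rw [h1, hσbs (m - (j + 1))]
                have h3 : m - (m - (j + 1)) = j + 1 := by omega
                rw [h3]
              rw [← add_mul, h2]
              ring
            have hmm : m - m = 0 := by omega
            rw [hmm, hσb0, hbm]
            have hsum : (∑ j ∈ Finset.range m, b (m - (j + 1)) * (⇑σR)^[j + 1] (x i))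
                + (∑ j ∈ Finset.range m, σR (b (m - j)) * (⇑σR)^[j + 1] (x i))
                = ∑ j ∈ Finset.range m, (d (j + 1) * t₀) * (⇑σR)^[j + 1] (x i) := by
              rw [← Finset.sum_add_distrib]
              exact Finset.sum_congr rfl hmid
            linear_combination hsum
          rw [Pi.smul_apply, hLHS, smul_eq_mul, Finset.mul_sum]
          refine Finset.sum_congr rfl fun j _ => ?_
          field_simp
        rw [hpt] at hfinal
        exact hfinal
    by_cases hc0 : c 0 = 0
    · -- limit argument
      set w : Fin s → K := fun i => ∑ j ∈ Finset.range (m + 1), c (j + 1) * (⇑σR)^[j + 1] (x i)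
        with hw
      set toP : MvPolynomial (Fin s) K →+* Polynomial K :=
        eval₂Hom (Polynomial.C : K →+* Polynomial K)
          (fun i => Polynomial.C (w i) + Polynomial.C (x i) * Polynomial.X) with htoP
      set q : Polynomial K := toP (MvPolynomial.map (algebraMap k K) f) with hq
      have hqt : ∀ t : K, Polynomial.eval t q
          = eval (fun i => t * x i + w i) (MvPolynomial.map (algebraMap k K) f) := by
        intro t
        have hcomp : (Polynomial.evalRingHom t).comp toP
            = (eval (fun i => t * x i + w i) : MvPolynomial (Fin s) K →+* K) := by
          apply MvPolynomial.ringHom_ext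
          · intro a; simp [htoP]
          · intro i; simp [htoP]; ring
        have h2 := RingHom.congr_fun hcomp (MvPolynomial.map (algebraMap k K) f)
        simpa [hq] using h2
      have hroots : {t : K | q.IsRoot t}.Infinite := by
        have hsub : ∀ {t : K}, t ≠ 0 → t ∈ {t : K | q.IsRoot t} := by
          intro t ht
          have hpt2 : (fun i => t * x i + w i)
              = fun i => ∑ j ∈ Finset.range (m + 2), (if j = 0 then t else c j) * (⇑σR)^[j] (x i) := by
            funext i
            rw [Finset.sum_range_succ'
              (fun j => (if j = 0 then t else c j) * (⇑σR)^[j] (x i)) (m + 1)]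
            simp only [Nat.succ_ne_zero, if_false, if_true, Function.iterate_zero, id_eq, hw,
              reduceIte]
            ring
          simp only [Set.mem_setOf_eq, Polynomial.IsRoot]
          rw [hqt, hpt2]
          exact key (fun j => if j = 0 then t else c j) (by simpa using ht)
        have hne := (Set.finite_singleton (0 : K)).infinite_compl
        refine hne.mono ?_
        intro t ht
        exact hsub (Set.mem_compl_singleton_iff.mp ht)
      have hq0 : q = 0 := Polynomial.eq_zero_of_infinite_isRoot q hroots
      have h0 := hqt 0
      rw [hq0] at h0
      simp only [Polynomial.eval_zero] at h0
      have hpt : (fun i => ∑ j ∈ Finset.range (m + 2), c j * (⇑σR)^[j] (x i))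
          = fun i => 0 * x i + w i := by
        funext i
        rw [Finset.sum_range_succ' (fun j => c j * (⇑σR)^[j] (x i)) (m + 1), hw]
        simp [hc0]
      rw [hpt]
      exact h0.symm
    · exact key c hc0

set_option maxHeartbeats 1000000 in
lemma stmt5_main_dep [IsAlgClosed K] (σR : K →+* K) (hσ : ∀ y : K, σR y ^ p = y)
    (Θ : MvPolynomial (Fin s) k →+* MvPolynomial (Fin s) k)
    (hΘC : ∀ a : k, Θ (C a) = C (a ^ p))
    (hΘX : ∀ i : Fin s, Θ (X i) = X i + X i ^ p)
    (I : Ideal (MvPolynomial (Fin s) k))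
    (hI_ne : I ≠ ⊥)
    (hI_hom : ∀ f ∈ I, ∀ n : ℕ, homogeneousComponent n f ∈ I)
    (hI_stab : ∀ f ∈ I, Θ f ∈ I)
    (x : Fin s → K) (hx : ∀ f ∈ I, eval x (MvPolynomial.map (algebraMap k K) f) = 0) :
    ∃ c : Fin s → ZMod p, c ≠ 0 ∧ ∑ i, (ZMod.castHom (dvd_refl p) K) (c i) * x i = 0 := by
  classical
  have hp0 : p ≠ 0 := (Fact.out : p.Prime).pos.ne'
  set g : ℕ → (Fin s → K) := fun j => fun i => (⇑σR)^[j] (x i) with hgdef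
  set U : Submodule K (Fin s → K) := Submodule.span K (Set.range g) with hUdef
  have hUV : ∀ u ∈ U, ∀ f ∈ I, eval u (MvPolynomial.map (algebraMap k K) f) = 0 := by
    intro u hu f hf
    rw [hUdef] at hu
    obtain ⟨l, hl⟩ := Finsupp.mem_span_range_iff_exists_finsupp.mp hu
    set m : ℕ := l.support.sup id with hm
    have hsupp : l.support ⊆ Finset.range (m + 1) := by
      intro j hj
      rw [Finset.mem_range]
      have : id j ≤ l.support.sup id := Finset.le_sup hj
      simp only [id] at this
      omega
    have hrep : u = fun i => ∑ j ∈ Finset.range (m + 1), l j * (⇑σR)^[j] (x i) := by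
      funext i
      rw [← congrFun hl i]
      calc (l.sum fun j a => a • g j) i
          = ∑ j ∈ l.support, l j * g j i := by
            rw [Finsupp.sum, Finset.sum_apply]
            exact Finset.sum_congr rfl fun j _ => rfl
        _ = ∑ j ∈ Finset.range (m + 1), l j * g j i := by
            refine Finset.sum_subset hsupp fun j _ hj => ?_
            rw [Finsupp.notMem_support_iff.mp hj, zero_mul]
        _ = ∑ j ∈ Finset.range (m + 1), l j * (⇑σR)^[j] (x i) := rfl
    rw [hrep]
    exact stmt5_dyn σR hσ Θ hΘC hΘX I hI_hom hI_stab x hx m l f hf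
  by_cases hUtop : U = ⊤
  · exfalso
    obtain ⟨f₀, hf₀I, hf₀⟩ := (Submodule.ne_bot_iff I).mp hI_ne
    have hmap0 : MvPolynomial.map (algebraMap k K) f₀ = 0 := by
      apply MvPolynomial.funext (q := 0)
      intro y
      rw [map_zero]
      exact hUV y (hUtop ▸ Submodule.mem_top) f₀ hf₀I
    exact hf₀ (MvPolynomial.map_injective _ (algebraMap k K).injective
      (by rw [hmap0, map_zero]))
  · have hlt : U < ⊤ := lt_top_iff_ne_top.mpr hUtop
    obtain ⟨ξ, hξne, hξmap⟩ := Submodule.exists_dual_map_eq_bot_of_lt_top hlt inferInstance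
    have hξ0 : ∀ u ∈ U, ξ u = 0 := by
      intro u hu
      have h1 : ξ u ∈ U.map ξ := Submodule.mem_map_of_mem hu
      rwa [hξmap, Submodule.mem_bot] at h1
    set w : Fin s → K := fun i => ξ (fun j => if i = j then 1 else 0) with hwdef
    have hrep : ∀ u : Fin s → K, ξ u = ∑ i, u i * w i := by
      intro u
      conv_lhs => rw [pi_eq_sum_univ u]
      rw [map_sum]
      refine Finset.sum_congr rfl fun i _ => ?_
      rw [map_smul, smul_eq_mul, hwdef]
    have hwne : w ≠ 0 := by
      intro h0
      apply hξne
      apply LinearMap.ext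
      intro u
      rw [hrep u]
      have : ∀ i, w i = 0 := fun i => congrFun h0 i
      simp [this]
    set A : Submodule K (Fin s → K) :=
      { carrier := {v | ∀ u ∈ U, ∑ i, u i * v i = 0}
        add_mem' := by
          intro a b ha hb u hu
          have : ∀ i, u i * (a + b) i = u i * a i + u i * b i := fun i => by
            simp [Pi.add_apply, mul_add]
          simp only [this, Finset.sum_add_distrib, ha u hu, hb u hu, add_zero]
        zero_mem' := by intro u hu; simp
        smul_mem' := by
          intro t v hv u hu
          have h1 : ∑ i, u i * (t • v) i = t * ∑ i, u i * v i := by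
            rw [Finset.mul_sum]
            exact Finset.sum_congr rfl fun i _ => by simp [Pi.smul_apply]; ring
          rw [h1, hv u hu, mul_zero] } with hAdef
    have hAmem : ∀ v : Fin s → K, v ∈ A ↔ ∀ u ∈ U, ∑ i, u i * v i = 0 := fun v => Iff.rfl
    have hUσ : ∀ u ∈ U, (fun i => σR (u i)) ∈ U := by
      intro u hu
      rw [hUdef] at hu ⊢
      induction hu using Submodule.span_induction with
      | mem v hv =>
        obtain ⟨j, rfl⟩ := hv
        apply Submodule.subset_span
        refine ⟨j + 1, ?_⟩
        funext i
        rw [hgdef]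
        simp only
        rw [Function.iterate_succ_apply' σR j (x i)]
      | zero =>
        have : (fun i => σR ((0 : Fin s → K) i)) = 0 := by funext i; simp
        rw [this]; exact Submodule.zero_mem _
      | add a b _ _ iha ihb =>
        have : (fun i => σR ((a + b) i)) = (fun i => σR (a i)) + fun i => σR (b i) := by
          funext i; simp
        rw [this]; exact Submodule.add_mem _ iha ihb
      | smul t a _ iha =>
        have : (fun i => σR ((t • a) i)) = σR t • fun i => σR (a i) := by
          funext i; simp
        rw [this]; exact Submodule.smul_mem _ _ iha
    have hAT : ∀ v ∈ A, (fun i => (v i) ^ p) ∈ A := by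
      intro v hv
      rw [hAmem] at hv ⊢
      intro u hu
      have hσu := hUσ u hu
      have h1 : ∑ i, u i * v i ^ p = (∑ i, σR (u i) * v i) ^ p := by
        rw [sum_pow_char]
        refine Finset.sum_congr rfl fun i _ => ?_
        rw [mul_pow, hσ (u i)]
      rw [h1, hv _ hσu, zero_pow hp0]
    have hwA : w ∈ A := by
      rw [hAmem]
      intro u hu
      rw [← hrep u]
      exact hξ0 u hu
    obtain ⟨v, hvA, hvne, hvfix⟩ := stmt5_exists_fixed_vector A hAT w hwA hwne
    choose cfun hcfun using fun i => stmt5_fixed_mem_range (v i) (hvfix i)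
    refine ⟨cfun, ?_, ?_⟩
    · intro h0
      apply hvne
      funext i
      rw [← hcfun i, congrFun h0 i]
      simp
    · have hxU : x ∈ U := by
        rw [hUdef]
        exact Submodule.subset_span ⟨0, by funext i; simp [hgdef]⟩
      have hvx : ∑ i, x i * v i = 0 := (hAmem v).mp hvA x hxU
      rw [← hvx]
      refine Finset.sum_congr rfl fun i _ => ?_
      rw [hcfun i]; ring

end Dyn


section Descend
variable {k : Type*} [Field k] {K : Type*} [Field K] [Algebra k K] {s : ℕ}

set_option maxHeartbeats 1000000 in
lemma stmt5_descend (I : Ideal (MvPolynomial (Fin s) k)) (P : MvPolynomial (Fin s) k)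
    (hP : MvPolynomial.map (algebraMap k K) P
      ∈ I.map (MvPolynomial.map (algebraMap k K) :
          MvPolynomial (Fin s) k →+* MvPolynomial (Fin s) K)) :
    P ∈ I := by
  classical
  have h1 : LinearIndepOn k id ({1} : Set K) :=
    LinearIndepOn.singleton one_ne_zero
  set b := Module.Basis.extend h1 with hb
  have h1mem : (1 : K) ∈ h1.extend (Set.subset_univ _) := h1.subset_extend _ rfl
  set π : K →ₗ[k] k := b.coord ⟨1, h1mem⟩ with hπ
  have hπ1 : π 1 = 1 := by
    have hb1 : b ⟨1, h1mem⟩ = 1 := Module.Basis.extend_apply_self h1 ⟨1, h1mem⟩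
    have h2 : π (b ⟨1, h1mem⟩) = 1 := by
      simp [hπ, Module.Basis.coord_apply, Module.Basis.repr_self]
    rw [hb1] at h2
    exact h2
  have hπa : ∀ a : k, π (algebraMap k K a) = a := by
    intro a
    rw [Algebra.algebraMap_eq_smul_one, map_smul, hπ1, smul_eq_mul, mul_one]
  set L : MvPolynomial (Fin s) K → MvPolynomial (Fin s) k :=
    fun G => ∑ d ∈ G.support, monomial d (π (coeff d G)) with hL
  have hLcoeff : ∀ (G : MvPolynomial (Fin s) K) (d : Fin s →₀ ℕ),
      coeff d (L G) = π (coeff d G) := by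
    intro G d
    rw [hL]
    simp only
    rw [coeff_sum]
    simp only [coeff_monomial]
    rw [Finset.sum_ite_eq' G.support d (fun d' => π (coeff d' G))]
    split
    · rfl
    · next hd => rw [notMem_support_iff.mp hd, map_zero]
  have hLadd : ∀ G H, L (G + H) = L G + L H := by
    intro G H; apply MvPolynomial.ext; intro d
    rw [coeff_add, hLcoeff, hLcoeff, hLcoeff, coeff_add, map_add]
  have hLmono : ∀ (e : Fin s →₀ ℕ) (a : K), L (monomial e a) = monomial e (π a) := by
    intro e a; apply MvPolynomial.ext; intro d
    rw [hLcoeff, coeff_monomial, coeff_monomial]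
    split
    · rfl
    · rw [map_zero]
  have hLmul : ∀ (G : MvPolynomial (Fin s) K) (h : MvPolynomial (Fin s) k),
      L (G * MvPolynomial.map (algebraMap k K) h) = L G * h := by
    intro G h
    induction G using MvPolynomial.induction_on' with
    | monomial u a =>
      induction h using MvPolynomial.induction_on' with
      | monomial d r =>
        rw [map_monomial, monomial_mul, hLmono, hLmono, monomial_mul]
        congr 1
        rw [show a * algebraMap k K r = r • a from by rw [Algebra.smul_def]; ring]
        rw [map_smul, smul_eq_mul]; ring
      | add q r ihq ihr =>
        rw [map_add, mul_add, hLadd, ihq, ihr, mul_add]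
    | add q r ihq ihr =>
      rw [add_mul, hLadd, ihq, ihr, hLadd q r, add_mul]
  have hLfix : ∀ h : MvPolynomial (Fin s) k, L (MvPolynomial.map (algebraMap k K) h) = h := by
    intro h
    apply MvPolynomial.ext; intro d
    rw [hLcoeff, coeff_map, hπa]
  have hP' : MvPolynomial.map (algebraMap k K) P
      ∈ Submodule.span (MvPolynomial (Fin s) K)
          ((MvPolynomial.map (algebraMap k K)) '' I) := hP
  obtain ⟨n, cf, gf, hsum⟩ := Submodule.mem_span_set'.mp hP'
  have hrw : P = L (∑ i : Fin n, cf i • (gf i : MvPolynomial (Fin s) K)) := by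
    rw [hsum, hLfix]
  rw [hrw]
  set Lhom : MvPolynomial (Fin s) K →+ MvPolynomial (Fin s) k :=
    AddMonoidHom.mk' L hLadd with hLhom
  have hLsum : L (∑ i : Fin n, cf i • (gf i : MvPolynomial (Fin s) K))
      = ∑ i : Fin n, L (cf i • (gf i : MvPolynomial (Fin s) K)) := by
    have := map_sum Lhom (fun i : Fin n => cf i • (gf i : MvPolynomial (Fin s) K)) Finset.univ
    exact this
  rw [hLsum]
  refine Ideal.sum_mem I fun i _ => ?_
  obtain ⟨h_i, hh_i, hgi⟩ := (gf i).2
  rw [smul_eq_mul, ← hgi, hLmul]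
  exact Ideal.mul_mem_left I _ hh_i

end Descend


set_option maxHeartbeats 1000000 in
theorem stmt5 (k : Type*) [Field k] (p : ℕ) [Fact p.Prime] [CharP k p]
    (s : ℕ) (hs : 0 < s)
    (Θ : MvPolynomial (Fin s) k →+* MvPolynomial (Fin s) k)
    (hΘC : ∀ a : k, Θ (C a) = C (a ^ p))
    (hΘX : ∀ i : Fin s, Θ (X i) = X i + X i ^ p)
    (I : Ideal (MvPolynomial (Fin s) k))
    (hI_ne : I ≠ ⊥)
    (hI_hom : ∀ f ∈ I, ∀ n : ℕ, homogeneousComponent n f ∈ I)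
    (hI_stab : ∀ f ∈ I, Θ f ∈ I) :
    ∃ m : ℕ, 0 < m ∧ ∃ u : Fin m → MvPolynomial (Fin s) k,
      (∀ i, u i ≠ 0 ∧ ∃ c : Fin s → ZMod p,
        u i = ∑ j, C (ZMod.castHom (dvd_refl p) k (c j)) * X j) ∧
      (∏ i, u i) ∈ I := by
  classical
  have hp2 : 2 ≤ p := (Fact.out : p.Prime).two_le
  haveI : Fact (1 < p) := ⟨hp2⟩
  set K := AlgebraicClosure k with hK
  haveI : CharP K p := charP_of_injective_ringHom (algebraMap k K).injective p
  -- the inverse Frobenius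
  set σR : K →+* K := ((frobeniusEquiv K p).symm : K ≃+* K).toRingHom with hσR
  have hσ : ∀ y : K, σR y ^ p = y := by
    intro y
    have h1 : frobenius K p (σR y) = y := by
      rw [hσR]
      exact (frobeniusEquiv K p).apply_symm_apply y
    rwa [frobenius_def] at h1
  -- the linear forms
  set ell : (Fin s → ZMod p) → MvPolynomial (Fin s) k :=
    fun c => ∑ j, C ((ZMod.castHom (dvd_refl p) k) (c j)) * X j with hell
  have hellcoeff : ∀ (c : Fin s → ZMod p) (j : Fin s),
      coeff (Finsupp.single j 1) (ell c) = (ZMod.castHom (dvd_refl p) k) (c j) := by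
    intro c j
    rw [hell]
    simp only
    rw [coeff_sum]
    have hterm : ∀ j' : Fin s,
        coeff (Finsupp.single j 1) (C ((ZMod.castHom (dvd_refl p) k) (c j')) * X j')
        = if j' = j then (ZMod.castHom (dvd_refl p) k) (c j') else 0 := by
      intro j'
      rw [C_mul_X_eq_monomial, coeff_monomial]
      congr 1
      simp only [eq_iff_iff]
      exact Finsupp.single_left_inj one_ne_zero
    rw [Finset.sum_congr rfl fun j' _ => hterm j']
    rw [Finset.sum_ite_eq' Finset.univ j (fun j' => (ZMod.castHom (dvd_refl p) k) (c j'))]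
    simp
  have hellne : ∀ c : Fin s → ZMod p, c ≠ 0 → ell c ≠ 0 := by
    intro c hc h0
    apply hc
    funext j
    have h1 := hellcoeff c j
    rw [h0, coeff_zero] at h1
    exact (ZMod.castHom (dvd_refl p) k).injective (a₁ := c j) (a₂ := 0) (by simp [← h1])
  -- the big product over nonzero 𝔽ₚ-vectors
  set S : Finset (Fin s → ZMod p) := Finset.univ.filter (fun c => c ≠ 0) with hS
  have hSne : S.Nonempty := by
    refine ⟨Pi.single ⟨0, hs⟩ 1, ?_⟩
    rw [hS, Finset.mem_filter]
    refine ⟨Finset.mem_univ _, ?_⟩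
    intro h0
    have := congrFun h0 ⟨0, hs⟩
    simp at this
  set gpoly : MvPolynomial (Fin s) k := ∏ c ∈ S, ell c with hgpoly
  -- the mapped ideal
  set Imap : Ideal (MvPolynomial (Fin s) K) :=
    I.map (MvPolynomial.map (algebraMap k K) :
      MvPolynomial (Fin s) k →+* MvPolynomial (Fin s) K) with hImap
  -- Nullstellensatz step
  have hgrad : MvPolynomial.map (algebraMap k K) gpoly ∈ Imap.radical := by
    rw [← vanishingIdeal_zeroLocus_eq_radical (K := K) Imap, mem_vanishingIdeal_iff]
    intro x hxz
    change eval x (MvPolynomial.map (algebraMap k K) gpoly) = 0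
    have hx : ∀ f ∈ I, eval x (MvPolynomial.map (algebraMap k K) f) = 0 := by
      intro f hf
      exact (mem_zeroLocus_iff.mp hxz) _ (Ideal.mem_map_of_mem _ hf)
    obtain ⟨c, hcne, hcsum⟩ :=
      stmt5_main_dep σR hσ Θ hΘC hΘX I hI_ne hI_hom hI_stab x hx
    have hcS : c ∈ S := by
      rw [hS, Finset.mem_filter]
      exact ⟨Finset.mem_univ _, hcne⟩
    rw [hgpoly, map_prod, map_prod]
    refine Finset.prod_eq_zero hcS ?_
    -- evaluate the factor
    have hfac : MvPolynomial.map (algebraMap k K) (ell c)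
        = ∑ j, C ((ZMod.castHom (dvd_refl p) K) (c j)) * X j := by
      rw [hell]
      simp only
      rw [map_sum]
      refine Finset.sum_congr rfl fun j _ => ?_
      rw [map_mul, MvPolynomial.map_C, MvPolynomial.map_X]
      congr 2
      exact RingHom.congr_fun (RingHom.ext_zmod
        ((algebraMap k K).comp (ZMod.castHom (dvd_refl p) k)) (ZMod.castHom (dvd_refl p) K)) (c j)
    rw [hfac, map_sum]
    rw [← hcsum]
    refine Finset.sum_congr rfl fun j _ => ?_
    rw [map_mul, eval_C, eval_X]
  obtain ⟨n, hn⟩ := Ideal.mem_radical_iff.mp hgrad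
  set N : ℕ := n + 1 with hN
  have hgN : MvPolynomial.map (algebraMap k K) (gpoly ^ N) ∈ Imap := by
    rw [map_pow, hN, pow_succ]
    exact Ideal.mul_mem_right _ _ hn
  have hgNI : gpoly ^ N ∈ I := stmt5_descend I (gpoly ^ N) (by rw [← hImap]; exact hgN)
  -- packaging
  set L : ℕ := S.card with hL
  have hLpos : 0 < L := Finset.card_pos.mpr hSne
  refine ⟨N * L, by positivity, ?_⟩
  set e1 : Fin N × Fin L ≃ Fin (N * L) := finProdFinEquiv with he1
  set e2 : {x // x ∈ S} ≃ Fin L := S.equivFin with he2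
  set u : Fin (N * L) → MvPolynomial (Fin s) k :=
    fun i => ell ((e2.symm (e1.symm i).2) : Fin s → ZMod p) with hu
  have hmemS : ∀ b : Fin L, ((e2.symm b : {x // x ∈ S}) : Fin s → ZMod p) ∈ S :=
    fun b => (e2.symm b).2
  have hSne0 : ∀ cc : Fin s → ZMod p, cc ∈ S → cc ≠ 0 := by
    intro cc hcc
    rw [hS, Finset.mem_filter] at hcc
    exact hcc.2
  refine ⟨u, fun i => ⟨?_, ?_⟩, ?_⟩
  · exact hellne _ (hSne0 _ (hmemS (e1.symm i).2))
  · exact ⟨_, rfl⟩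
  · have hprod : ∏ i, u i = gpoly ^ N := by
      have h1 : ∏ i, u i = ∏ q : Fin N × Fin L, u (e1 q) := (Equiv.prod_comp e1 u).symm
      rw [h1]
      have h2 : ∀ q : Fin N × Fin L, u (e1 q) = ell ((e2.symm q.2 : {x // x ∈ S}) : Fin s → ZMod p) := by
        intro q
        rw [hu]
        simp only [Equiv.symm_apply_apply]
      rw [Finset.prod_congr rfl fun q _ => h2 q]
      rw [Fintype.prod_prod_type]
      have h3 : ∀ a : Fin N, (∏ b : Fin L, ell ((e2.symm b : {x // x ∈ S}) : Fin s → ZMod p))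
          = gpoly := by
        intro a
        have h4 := Equiv.prod_comp e2.symm
          (fun cc : {x // x ∈ S} => ell (cc : Fin s → ZMod p))
        rw [h4, hgpoly]
        exact Finset.prod_coe_sort S ell
      rw [Finset.prod_congr rfl fun a _ => h3 a, Finset.prod_const]
      simp
    rw [hprod]
    exact hgNI
end

section
/- Let k be a field of characteristic p > 0, G a finite group, φ : G → ℤ/p a surjective group homomorphism with kernel N, and M a kG-module such that H^j(N, M) = 0 for all j > 0. Let z_1 ∈ H^2(ℤ/p, k) denote the canonical polynomial generator of the cohomology ring of ℤ/p, and let ζ = φ*(z_1) ∈ H^2(G, k) be its pullback along φ. Then, for the cup product action of H^*(G, k) on H^*(G, M), multiplication by ζ induces an isomorphism H^j(G, M) → H^{j+2}(G, M) for all j > 0. -/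
/-!
STATEMENT 11 (Chouinard's periodicity lemma): Let `k` be a field of
characteristic `p > 0`, `G` a finite group, `φ : G → ℤ/p` a surjective
homomorphism with kernel `N`, and `M` a `kG`-module (given by a representation
`ρM : Representation k G V`) such that `H^j(N, M) = 0` for all `j > 0`.  Let
`ζ = φ*(z₁) ∈ H^2(G, k)` be the pullback of the canonical polynomial generator
`z₁ ∈ H^2(ℤ/p, k)`.  Then cup product with `ζ` induces an isomorphism
`H^j(G, M) → H^{j+2}(G, M)` for all `j > 0`.

We work with the standard complex of inhomogeneous cochains computing group
cohomology (`dC` is the differential, the same formula as Mathlib's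
`inhomogeneousCochains.d`); `H^j(N, M) = 0` means every `j`-cocycle of `N` is a
coboundary.  `z₁` is represented by the "carrying" 2-cocycle
`(a, b) ↦ (val a + val b) / p` on `ℤ/p` (the Bockstein `β(y₁)` for odd `p`,
and `y₁²` for `p = 2`), so `ζ` is represented by the 2-cocycle
`x ↦ ((val (φ x₀) + val (φ x₁)) / p : k)`.  Bijectivity of the induced map
`ζ ⌣ - : H^j(G, M) → H^{j+2}(G, M)` is expressed at the level of cocycles:
(injectivity) a `j`-cocycle `f` with `ζ ⌣ f` a coboundary is a coboundary, and
(surjectivity) every `(j+2)`-cocycle agrees with some `ζ ⌣ f`, `f` a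
`j`-cocycle, up to a coboundary.
-/

section CochainMachinery

variable {k G V : Type*} [CommRing k] [Group G] [AddCommGroup V] [Module k V]

/-- The differential on inhomogeneous cochains (the standard formula, as in
`inhomogeneousCochains.d`). -/
def dC (ρ : Representation k G V) {n : ℕ} (f : (Fin n → G) → V) :
    (Fin (n + 1) → G) → V := fun x =>
  ρ (x 0) (f fun i => x i.succ) +
    ∑ j : Fin (n + 1), ((-1 : ℤ) ^ ((j : ℕ) + 1)) • f (Fin.contractNth j (· * ·) x)

/-- `F` is a coboundary; in degree `0` this means `F = 0`. -/
def IsCoboundary (ρ : Representation k G V) : (N : ℕ) → ((Fin N → G) → V) → Prop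
  | 0, F => F = 0
  | j + 1, F => ∃ E : (Fin j → G) → V, dC ρ E = F

/-- Reindexing a cochain along an equality of degrees. -/
def ccast {a b : ℕ} (h : a = b) (f : (Fin a → G) → V) : (Fin b → G) → V :=
  fun x => f fun i => x (Fin.cast h i)

/-- The cup product of a `k`-valued cochain with an `M`-valued cochain, giving
the action of `H^*(G, k)` on `H^*(G, M)`. -/
def cupSMul (ρ : Representation k G V) {a b : ℕ}
    (f : (Fin a → G) → k) (g : (Fin b → G) → V) : (Fin (a + b) → G) → V :=
  fun x =>
    f (fun i => x (Fin.castAdd b i)) •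
      ρ ((List.ofFn fun i : Fin a => x (Fin.castAdd b i)).prod)
        (g fun j => x (Fin.natAdd a j))

end CochainMachinery

set_option linter.unusedSectionVars false
namespace Ch

variable {k G W : Type*} [CommRing k] [Group G] [AddCommGroup W] [Module k W]

/-- deletion of the `i`-th coordinate. -/
def del {m : ℕ} (i : ℕ) (x : Fin (m + 1) → G) : Fin m → G :=
  fun l => if (l : ℕ) < i then x l.castSucc else x l.succ

/-- homogeneous differential. -/
def hD {m : ℕ} (F : (Fin (m + 1) → G) → W) : (Fin (m + 2) → G) → W :=
  fun x => ∑ i : Fin (m + 2), ((-1 : ℤ) ^ (i : ℕ)) • F (del (i : ℕ) x)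

def toI {n : ℕ} (F : (Fin (n + 1) → G) → W) : (Fin n → G) → W :=
  fun x => F (Fin.partialProd x)

def diffs {n : ℕ} (x : Fin (n + 1) → G) : Fin n → G :=
  fun i => (x i.castSucc)⁻¹ * x i.succ

def fromI (σ : Representation k G W) {n : ℕ} (f : (Fin n → G) → W) :
    (Fin (n + 1) → G) → W :=
  fun x => σ (x 0) (f (diffs x))

def Eqv (σ : Representation k G W) {n : ℕ} (F : (Fin n → G) → W) : Prop :=
  ∀ (g : G) (x : Fin n → G), F (fun l => g * x l) = σ g (F x)

variable (σ : Representation k G W)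

theorem del_comp_mul {m : ℕ} (i : ℕ) (g : G) (x : Fin (m + 1) → G) :
    del i (fun l => g * x l) = fun l => g * del i x l := by
  funext l; unfold del; split <;> rfl

theorem del_eq_succAbove {m : ℕ} (i : Fin (m + 1)) (x : Fin (m + 1) → G) :
    del (i : ℕ) x = x ∘ i.succAbove := by
  funext l
  unfold del
  rw [Function.comp_apply, Fin.succAbove]
  split
  · rw [if_pos]; rwa [Fin.lt_def] at *
  · rw [if_neg]; intro h; rw [Fin.lt_def] at *; exact absurd h (by assumption)

theorem eqv_fromI {n : ℕ} (f : (Fin n → G) → W) : Eqv σ (fromI σ f) := by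
  intro g x
  unfold fromI
  have : diffs (fun l => g * x l) = diffs x := by
    funext i; unfold diffs; simp [mul_assoc]
  rw [this]
  simp [map_mul]

theorem eqv_hD {m : ℕ} (F : (Fin (m + 1) → G) → W) (hF : Eqv σ F) : Eqv σ (hD F) := by
  intro g x
  unfold hD
  rw [map_sum]
  refine Finset.sum_congr rfl fun i _ => ?_
  rw [del_comp_mul, hF, map_zsmul]

theorem toI_fromI {n : ℕ} (f : (Fin n → G) → W) : toI (fromI σ f) = f := by
  funext x
  unfold toI fromI
  rw [Fin.partialProd_zero, map_one, Module.End.one_apply]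
  congr 1
  funext i
  exact Fin.partialProd_right_inv x i

theorem fromI_toI {n : ℕ} (F : (Fin (n + 1) → G) → W) (hF : Eqv σ F) :
    fromI σ (toI F) = F := by
  funext x
  unfold toI fromI
  rw [← hF]
  congr 1
  funext l
  have := congrFun (Fin.partialProd_left_inv x) l
  unfold diffs
  simpa [Fin.coe_eq_castSucc] using this

/-- The inhomogeneous differential is `toI ∘ hD ∘ fromI`. -/
theorem dC_eq_toI_hD {n : ℕ} (f : (Fin n → G) → W) :
    dC σ f = toI (hD (fromI σ f)) := by
  funext x
  unfold toI hD dC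
  conv_rhs => rw [Fin.sum_univ_succ]
  simp only [Fin.val_zero, Fin.val_succ, pow_zero, one_smul]
  congr 1
  · have h0 : del (0 : ℕ) (Fin.partialProd x) =
        fun l : Fin (n + 1) => Fin.partialProd x l.succ := by
      funext l; unfold del; rw [if_neg (by omega)]
    rw [h0]
    unfold fromI
    show σ (x 0) (f fun i => x i.succ) =
      σ (Fin.partialProd x (0 : Fin (n + 1)).succ)
        (f (diffs fun l : Fin (n + 1) => Fin.partialProd x l.succ))
    have h1 : Fin.partialProd x (0 : Fin (n + 1)).succ = x 0 := by
      rw [Fin.partialProd_succ, Fin.castSucc_zero, Fin.partialProd_zero, one_mul]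
    rw [h1]
    refine congrArg (σ (x 0)) (congrArg f (funext fun i => ?_))
    show x i.succ = diffs (fun l : Fin (n + 1) => Fin.partialProd x l.succ) i
    unfold diffs
    show x i.succ = (Fin.partialProd x (i.castSucc.succ))⁻¹ * Fin.partialProd x (i.succ.succ)
    rw [← Fin.castSucc_fin_succ]
    exact (Fin.partialProd_right_inv x i.succ).symm
  · refine Finset.sum_congr rfl fun a _ => ?_
    congr 1
    have hdel : del ((a : ℕ) + 1) (Fin.partialProd x) =
        Fin.partialProd x ∘ (a.succ).succAbove := by
      have h := del_eq_succAbove (G := G) a.succ (Fin.partialProd x)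
      rwa [Fin.val_succ] at h
    rw [hdel]
    unfold fromI
    show f (Fin.contractNth a (· * ·) x) =
      σ ((Fin.partialProd x ∘ (a.succ).succAbove) 0)
        (f (diffs (Fin.partialProd x ∘ (a.succ).succAbove)))
    have h2 : (Fin.partialProd x ∘ (a.succ).succAbove) 0 = 1 := by
      rw [Function.comp_apply, Fin.succ_succAbove_zero, Fin.partialProd_zero]
    rw [h2, map_one, Module.End.one_apply]
    refine congrArg f (funext fun i => ?_)
    show Fin.contractNth a (· * ·) x i = diffs (Fin.partialProd x ∘ (a.succ).succAbove) i
    unfold diffs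
    show Fin.contractNth a (· * ·) x i =
      ((Fin.partialProd x (a.succ.succAbove i.castSucc))⁻¹ *
        Fin.partialProd x (a.succ.succAbove i.succ))
    rw [Fin.succ_succAbove_succ]
    exact (Fin.inv_partialProd_mul_eq_contractNth x a i).symm

theorem dC_toI {n : ℕ} (F : (Fin (n + 1) → G) → W) (hF : Eqv σ F) :
    dC σ (toI F) = toI (hD F) := by
  rw [dC_eq_toI_hD σ (toI F), fromI_toI σ F hF]

theorem fromI_dC {n : ℕ} (f : (Fin n → G) → W) :
    fromI σ (dC σ f) = hD (fromI σ f) := by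
  rw [dC_eq_toI_hD σ f, fromI_toI σ _ (eqv_hD σ _ (eqv_fromI σ f))]

theorem dC_post {W' : Type*} [AddCommGroup W'] [Module k W']
    (σ' : Representation k G W') (u : W →+ W')
    (hcomm : ∀ (g : G) (w : W), u (σ g w) = σ' g (u w)) {n : ℕ}
    (F : (Fin n → G) → W) :
    dC σ' (fun y => u (F y)) = fun x => u (dC σ F x) := by
  funext x
  unfold dC
  rw [map_add, map_sum, hcomm]
  congr 1
  exact Finset.sum_congr rfl fun j _ => (map_zsmul u _ _).symm

end Ch

namespace Ch

variable {k G W : Type*} [CommRing k] [Group G] [AddCommGroup W] [Module k W]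
variable (σ : Representation k G W)

theorem del_del {m : ℕ} (i l : ℕ) (hil : i < l) (hl : l ≤ m + 1) (x : Fin (m + 2) → G) :
    del i (del l x) = del (l - 1) (del i x) := by
  funext q
  unfold del
  simp only [Fin.coe_castSucc, Fin.val_succ]
  split_ifs <;>
    first
      | rfl
      | (exact congrArg x (Fin.ext (by simp only [Fin.coe_castSucc, Fin.val_succ]; omega)))
      | (exfalso; omega)

theorem toI_zero {n : ℕ} : toI (0 : (Fin (n + 1) → G) → W) = 0 := rfl

theorem hD_zero {m : ℕ} : hD (0 : (Fin (m + 1) → G) → W) = 0 := by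
  funext x; unfold hD; simp

theorem hD_hD {m : ℕ} (F : (Fin (m + 1) → G) → W) : hD (hD F) = 0 := by
  funext x
  unfold hD
  rw [Fin.sum_univ_eq_sum_range (fun l =>
    ((-1 : ℤ) ^ l) • ∑ i : Fin (m + 2), ((-1 : ℤ) ^ (i : ℕ)) • F (del (i : ℕ) (del l x)))]
  have hswap : ∀ l : ℕ,
      ((-1 : ℤ) ^ l) • ∑ i : Fin (m + 2), ((-1 : ℤ) ^ (i : ℕ)) • F (del (i : ℕ) (del l x)) =
      ∑ i ∈ Finset.range (m + 2), ((-1 : ℤ) ^ (l + i)) • F (del i (del l x)) := by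
    intro l
    rw [Fin.sum_univ_eq_sum_range (fun i => ((-1 : ℤ) ^ i) • F (del i (del l x))),
      Finset.smul_sum]
    exact Finset.sum_congr rfl fun i _ => by rw [smul_smul, ← pow_add]
  simp only [hswap]
  rw [← Finset.sum_product']
  have hsplit := Finset.sum_filter_add_sum_filter_not
    ((Finset.range (m + 3)) ×ˢ (Finset.range (m + 2)))
    (fun q : ℕ × ℕ => q.2 < q.1)
    (fun q : ℕ × ℕ => ((-1 : ℤ) ^ (q.1 + q.2)) • F (del q.2 (del q.1 x)))
  rw [← hsplit]
  have hbij : ∑ q ∈ ((Finset.range (m + 3)) ×ˢ (Finset.range (m + 2))).filter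
        (fun q : ℕ × ℕ => q.2 < q.1),
      ((-1 : ℤ) ^ (q.1 + q.2)) • F (del q.2 (del q.1 x)) =
      ∑ q ∈ ((Finset.range (m + 3)) ×ˢ (Finset.range (m + 2))).filter
        (fun q : ℕ × ℕ => ¬ q.2 < q.1),
      -(((-1 : ℤ) ^ (q.1 + q.2)) • F (del q.2 (del q.1 x))) := by
    refine Finset.sum_nbij' (i := fun q => (q.2, q.1 - 1)) (j := fun q => (q.2 + 1, q.1))
      ?_ ?_ ?_ ?_ ?_
    · intro q hq
      simp only [Finset.mem_filter, Finset.mem_product, Finset.mem_range] at hq ⊢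
      omega
    · intro q hq
      simp only [Finset.mem_filter, Finset.mem_product, Finset.mem_range] at hq ⊢
      omega
    · intro q hq
      simp only [Finset.mem_filter, Finset.mem_product, Finset.mem_range] at hq
      ext <;> simp <;> omega
    · intro q hq
      simp only [Finset.mem_filter, Finset.mem_product, Finset.mem_range] at hq
      ext <;> simp <;> omega
    · intro q hq
      simp only [Finset.mem_filter, Finset.mem_product, Finset.mem_range] at hq
      show ((-1 : ℤ) ^ (q.1 + q.2)) • F (del q.2 (del q.1 x)) =
        -(((-1 : ℤ) ^ (q.2 + (q.1 - 1))) • F (del (q.1 - 1) (del q.2 x)))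
      rw [← del_del q.2 q.1 hq.2 (by omega) x]
      have hpow : ((-1 : ℤ) ^ (q.1 + q.2)) = -((-1 : ℤ) ^ (q.2 + (q.1 - 1))) := by
        have h1 : q.1 + q.2 = (q.2 + (q.1 - 1)) + 1 := by omega
        rw [h1, pow_succ]
        ring
      rw [hpow, neg_smul]
  rw [hbij, Finset.sum_neg_distrib, neg_add_cancel]
  rfl

theorem dC_dC {n : ℕ} (f : (Fin n → G) → W) : dC σ (dC σ f) = 0 := by
  rw [dC_eq_toI_hD σ (dC σ f), fromI_dC σ f, hD_hD, toI_zero]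

end Ch

namespace Ch

variable {k G W : Type*} [CommRing k] [Group G] [AddCommGroup W] [Module k W]

/-- prism degeneracy: `(u x₀, …, u xᵢ, xᵢ, …, xₘ)`. -/
def pr (u : G → G) {m : ℕ} (i : ℕ) (x : Fin (m + 1) → G) : Fin (m + 2) → G :=
  fun l => if h : (l : ℕ) ≤ i ∧ (l : ℕ) ≤ m then u (x ⟨(l : ℕ), by omega⟩)
    else x ⟨(l : ℕ) - 1, by have := l.isLt; omega⟩

/-- the prism homotopy operator. -/
def Pr (u : G → G) {m : ℕ} (F : (Fin (m + 2) → G) → W) (x : Fin (m + 1) → G) : W :=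
  ∑ i ∈ Finset.range (m + 1), ((-1 : ℤ) ^ i) • F (pr u i x)

def sep (u : G → G) {m : ℕ} (j : ℕ) (x : Fin m → G) : Fin m → G :=
  fun l => if (l : ℕ) < j then u (x l) else x l

theorem sep_zero (u : G → G) {m : ℕ} (x : Fin m → G) : sep u 0 x = x := by
  funext l; unfold sep; rw [if_neg (by omega)]

theorem sep_top (u : G → G) {m : ℕ} (j : ℕ) (hj : m ≤ j) (x : Fin m → G) :
    sep u j x = fun l => u (x l) := by
  funext l; unfold sep; rw [if_pos (by have := l.isLt; omega)]

section dlem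

variable (u : G → G) {n : ℕ} (x : Fin (n + 2) → G)

theorem del_pr_diag_lo (i : ℕ) (hi : i ≤ n + 1) : del i (pr u i x) = sep u i x := by
  funext l
  unfold del pr sep
  simp only [Fin.coe_castSucc, Fin.val_succ]
  split_ifs <;>
    first
      | rfl
      | (exact congrArg u (congrArg x (Fin.ext (by simp only []; omega))))
      | (exact congrArg x (Fin.ext (by simp only []; omega)))
      | (exfalso; have := l.isLt; omega)

theorem del_pr_diag_hi (i : ℕ) (hi : i ≤ n + 1) :
    del (i + 1) (pr u i x) = sep u (i + 1) x := by
  funext l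
  unfold del pr sep
  simp only [Fin.coe_castSucc, Fin.val_succ]
  split_ifs <;>
    first
      | rfl
      | (exact congrArg u (congrArg x (Fin.ext (by simp only []; omega))))
      | (exact congrArg x (Fin.ext (by simp only []; omega)))
      | (exfalso; have := l.isLt; omega)

theorem del_pr_lt (i m : ℕ) (him : m < i) (hi : i ≤ n + 1) :
    del m (pr u i x) = pr u (i - 1) (del m x) := by
  funext l
  unfold del pr
  simp only [Fin.coe_castSucc, Fin.val_succ]
  split_ifs <;>
    first
      | rfl
      | (exact congrArg u (congrArg x (Fin.ext (by simp only [Fin.coe_castSucc, Fin.val_succ]; omega))))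
      | (exact congrArg x (Fin.ext (by simp only [Fin.coe_castSucc, Fin.val_succ]; omega)))
      | (exfalso; have := l.isLt; omega)

theorem del_pr_gt (i m : ℕ) (him : i + 1 < m) (hm : m ≤ n + 2) :
    del m (pr u i x) = pr u i (del (m - 1) x) := by
  funext l
  unfold del pr
  simp only [Fin.coe_castSucc, Fin.val_succ]
  split_ifs <;>
    first
      | rfl
      | (exact congrArg u (congrArg x (Fin.ext (by simp only [Fin.coe_castSucc, Fin.val_succ]; omega))))
      | (exact congrArg x (Fin.ext (by simp only [Fin.coe_castSucc, Fin.val_succ]; omega)))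
      | (exfalso; have := l.isLt; omega)

end dlem

theorem prism (u : G → G) {n : ℕ} (F : (Fin (n + 2) → G) → W) (x : Fin (n + 2) → G) :
    hD (Pr u F) x + Pr u (hD F) x = F x - F (fun l => u (x l)) := by
  classical
  set c : ℕ → ℕ → W := fun i m => ((-1 : ℤ) ^ (i + m)) • F (del m (pr u i x)) with hc
  set e : ℕ → ℕ → W := fun i l => ((-1 : ℤ) ^ (i + l)) • F (pr u i (del l x)) with he
  have step1 : Pr u (hD F) x =
      ∑ i ∈ Finset.range (n + 2), ∑ m ∈ Finset.range (n + 3), c i m := by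
    unfold Pr hD
    refine Finset.sum_congr rfl fun i _ => ?_
    rw [Fin.sum_univ_eq_sum_range (fun m => ((-1 : ℤ) ^ m) • F (del m (pr u i x))),
      Finset.smul_sum]
    exact Finset.sum_congr rfl fun m _ => by rw [smul_smul, ← pow_add]
  have step2 : hD (Pr u F) x =
      ∑ i ∈ Finset.range (n + 1), ∑ l ∈ Finset.range (n + 2), e i l := by
    unfold hD Pr
    rw [Fin.sum_univ_eq_sum_range (fun l => ((-1 : ℤ) ^ l) •
      ∑ i ∈ Finset.range (n + 1), ((-1 : ℤ) ^ i) • F (pr u i (del l x)))]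
    have hinner : ∀ l ∈ Finset.range (n + 2),
        ((-1 : ℤ) ^ l) • ∑ i ∈ Finset.range (n + 1), ((-1 : ℤ) ^ i) • F (pr u i (del l x)) =
        ∑ i ∈ Finset.range (n + 1), e i l := by
      intro l _
      rw [Finset.smul_sum]
      refine Finset.sum_congr rfl fun i _ => ?_
      rw [smul_smul, ← pow_add, Nat.add_comm l i]
    rw [Finset.sum_congr rfl hinner, Finset.sum_comm]
  have step3 : ∀ i ∈ Finset.range (n + 2),
      ∑ m ∈ Finset.range (n + 3), c i m =
        (∑ m ∈ Finset.Ico 0 i, c i m) +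
          ((c i i + c i (i + 1)) + ∑ m ∈ Finset.Ico (i + 2) (n + 3), c i m) := by
    intro i hi
    rw [Finset.mem_range] at hi
    rw [Finset.range_eq_Ico,
      ← Finset.sum_Ico_consecutive (fun m => c i m) (Nat.zero_le i) (by omega : i ≤ n + 3),
      ← Finset.sum_Ico_consecutive (fun m => c i m) (by omega : i ≤ i + 2) (by omega : i + 2 ≤ n + 3)]
    congr 2
    rw [Finset.sum_Ico_succ_top (by omega : i ≤ i + 1),
      Finset.sum_Ico_succ_top (le_refl i), Finset.Ico_self, Finset.sum_empty, zero_add]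
  have stepDiag : ∑ i ∈ Finset.range (n + 2), (c i i + c i (i + 1)) =
      F x - F (fun l => u (x l)) := by
    have hterm : ∀ i ∈ Finset.range (n + 2),
        c i i + c i (i + 1) = F (sep u i x) - F (sep u (i + 1) x) := by
      intro i hi
      rw [Finset.mem_range] at hi
      rw [hc]
      simp only []
      rw [del_pr_diag_lo u x i (by omega), del_pr_diag_hi u x i (by omega)]
      have h1 : ((-1 : ℤ) ^ (i + i)) = 1 := Even.neg_one_pow ⟨i, rfl⟩
      have h2 : ((-1 : ℤ) ^ (i + (i + 1))) = -1 := Odd.neg_one_pow ⟨i, by omega⟩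
      rw [h1, h2, one_smul, neg_one_smul ℤ, ← sub_eq_add_neg]
    rw [Finset.sum_congr rfl hterm, Finset.sum_range_sub' (fun i => F (sep u i x)) (n + 2),
      sep_zero, sep_top u (n + 2) (le_refl _) x]
  have stepA : ∑ i ∈ Finset.range (n + 2), ∑ m ∈ Finset.Ico 0 i, c i m =
      -∑ i ∈ Finset.range (n + 1), ∑ m ∈ Finset.Ico 0 (i + 1), e i m := by
    rw [Finset.sum_range_succ' (fun i => ∑ m ∈ Finset.Ico 0 i, c i m) (n + 1)]
    rw [Finset.Ico_self, Finset.sum_empty, add_zero]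
    rw [← Finset.sum_neg_distrib]
    refine Finset.sum_congr rfl fun i hi => ?_
    rw [Finset.mem_range] at hi
    rw [← Finset.sum_neg_distrib]
    refine Finset.sum_congr rfl fun m hm => ?_
    rw [Finset.mem_Ico] at hm
    rw [hc, he]
    simp only []
    rw [del_pr_lt u x (i + 1) m (by omega) (by omega)]
    have hidx : i + 1 - 1 = i := by omega
    rw [hidx]
    have hpow : ((-1 : ℤ) ^ (i + 1 + m)) = -((-1 : ℤ) ^ (i + m)) := by
      have : i + 1 + m = (i + m) + 1 := by omega
      rw [this, pow_succ]; ring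
    rw [hpow, neg_smul]
  have stepC : ∑ i ∈ Finset.range (n + 2), ∑ m ∈ Finset.Ico (i + 2) (n + 3), c i m =
      -∑ i ∈ Finset.range (n + 1), ∑ m ∈ Finset.Ico (i + 1) (n + 2), e i m := by
    have hterm : ∀ i ∈ Finset.range (n + 2),
        ∑ m ∈ Finset.Ico (i + 2) (n + 3), c i m =
          -∑ m ∈ Finset.Ico (i + 1) (n + 2), e i m := by
      intro i hi
      rw [Finset.mem_range] at hi
      rw [Finset.sum_Ico_eq_sum_range (f := fun m => c i m),
        Finset.sum_Ico_eq_sum_range (f := fun m => e i m)]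
      have hlen : n + 3 - (i + 2) = n + 2 - (i + 1) := by omega
      rw [hlen, ← Finset.sum_neg_distrib]
      refine Finset.sum_congr rfl fun j hj => ?_
      rw [Finset.mem_range] at hj
      rw [hc, he]
      simp only []
      rw [del_pr_gt u x i (i + 2 + j) (by omega) (by omega)]
      have hidx : i + 2 + j - 1 = i + 1 + j := by omega
      rw [hidx]
      have hpow : ((-1 : ℤ) ^ (i + (i + 2 + j))) = -((-1 : ℤ) ^ (i + (i + 1 + j))) := by
        have : i + (i + 2 + j) = (i + (i + 1 + j)) + 1 := by omega
        rw [this, pow_succ]; ring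
      rw [hpow, neg_smul]
    rw [Finset.sum_congr rfl hterm]
    rw [Finset.sum_range_succ]
    rw [Finset.Ico_self, Finset.sum_empty, neg_zero, add_zero, ← Finset.sum_neg_distrib]
  have combine : ∑ i ∈ Finset.range (n + 1), ∑ m ∈ Finset.Ico 0 (i + 1), e i m +
      ∑ i ∈ Finset.range (n + 1), ∑ m ∈ Finset.Ico (i + 1) (n + 2), e i m =
      hD (Pr u F) x := by
    rw [step2, ← Finset.sum_add_distrib]
    refine Finset.sum_congr rfl fun i hi => ?_
    rw [Finset.mem_range] at hi
    rw [Finset.sum_Ico_consecutive (fun m => e i m) (Nat.zero_le _) (by omega : i + 1 ≤ n + 2)]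
    rw [Finset.range_eq_Ico]
  rw [step1, Finset.sum_congr rfl step3, Finset.sum_add_distrib, Finset.sum_add_distrib,
    stepA, stepC, stepDiag]
  have hfin := combine
  generalize hA : ∑ i ∈ Finset.range (n + 1), ∑ m ∈ Finset.Ico 0 (i + 1), e i m = A at *
  generalize hC : ∑ i ∈ Finset.range (n + 1), ∑ m ∈ Finset.Ico (i + 1) (n + 2), e i m = C at *
  rw [← hfin]
  abel

end Ch

namespace Ch

section Setting

variable {k G V : Type*} [CommRing k] [Group G] [AddCommGroup V] [Module k V]
variable {p : ℕ} [NeZero p]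
variable (φ : G →* Multiplicative (ZMod p)) (hφ : Function.Surjective φ)
variable (ρM : Representation k G V)

/-- `t g = toAdd (φ g)`. -/
def tA (g : G) : ZMod p := Multiplicative.toAdd (φ g)

theorem tA_mul (g h : G) : tA φ (g * h) = tA φ g + tA φ h := by
  unfold tA; rw [map_mul]; rfl

theorem tA_inv (g : G) : tA φ g⁻¹ = -tA φ g := by
  unfold tA; rw [map_inv]; rfl

theorem tA_ker (ν : MonoidHom.ker φ) : tA φ (ν : G) = 0 := by
  unfold tA
  rw [MonoidHom.mem_ker.mp ν.2]; rfl

theorem mem_ker_tA {g : G} (h : tA φ g = 0) : g ∈ MonoidHom.ker φ := by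
  rw [MonoidHom.mem_ker]
  have h2 : Multiplicative.toAdd (φ g) = 0 := h
  calc φ g = Multiplicative.ofAdd (Multiplicative.toAdd (φ g)) := rfl
  _ = Multiplicative.ofAdd 0 := by rw [h2]
  _ = 1 := rfl

/-- a set-theoretic section of `φ`. -/
noncomputable def sec (a : ZMod p) : G := (hφ (Multiplicative.ofAdd a)).choose

theorem tA_sec (a : ZMod p) : tA φ (sec φ hφ a) = a := by
  unfold tA sec
  rw [(hφ (Multiplicative.ofAdd a)).choose_spec]; rfl

/-- the coinduced representation on `ZMod p → V`. -/
noncomputable def rX : Representation k G (ZMod p → V) where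
  toFun g :=
    { toFun := fun q a => ρM g (q (a - tA φ g))
      map_add' := fun q r => by funext a; simp
      map_smul' := fun c q => by funext a; simp }
  map_one' := LinearMap.ext fun q => funext fun a => by
    show ρM 1 (q (a - tA φ 1)) = q a
    have h1 : tA φ (1 : G) = 0 := by unfold tA; rw [map_one]; rfl
    rw [h1, sub_zero, map_one, Module.End.one_apply]
  map_mul' := fun g h => LinearMap.ext fun q => funext fun a => by
    show ρM (g * h) (q (a - tA φ (g * h))) = ρM g (ρM h (q (a - tA φ g - tA φ h)))
    rw [map_mul, Module.End.mul_apply, tA_mul, sub_sub]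

theorem rX_apply (g : G) (q : ZMod p → V) (a : ZMod p) :
    rX φ ρM g q a = ρM g (q (a - tA φ g)) := rfl

/-- `π g = g * (sec (t g))⁻¹ ∈ ker φ`, as an element of the kernel. -/
noncomputable def piN (g : G) : MonoidHom.ker φ :=
  ⟨g * (sec φ hφ (tA φ g))⁻¹, mem_ker_tA φ (by
    rw [tA_mul, tA_inv, tA_sec, add_neg_cancel])⟩

theorem piN_mul_ker (ν : MonoidHom.ker φ) (g : G) :
    piN φ hφ ((ν : G) * g) = ν * piN φ hφ g := by
  apply Subtype.ext
  show (ν : G) * g * (sec φ hφ (tA φ ((ν : G) * g)))⁻¹ =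
    (ν : G) * (g * (sec φ hφ (tA φ g))⁻¹)
  rw [tA_mul, tA_ker, zero_add, mul_assoc]

/-- Frobenius transcription. -/
noncomputable def Frob {m : ℕ} (H : (Fin m → G) → V) : (Fin m → G) → (ZMod p → V) :=
  fun x a => ρM (sec φ hφ a) (H fun l => (sec φ hφ a)⁻¹ * x l)

/-- pull back along `π` coordinatewise. -/
noncomputable def Bst {m : ℕ} (HN : (Fin m → MonoidHom.ker φ) → V) : (Fin m → G) → V :=
  fun x => HN fun l => piN φ hφ (x l)

/-- restriction of cochains to the kernel, evaluated at `0`. -/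
def resC {m : ℕ} (F : (Fin m → G) → (ZMod p → V)) : (Fin m → MonoidHom.ker φ) → V :=
  fun ν => F (fun l => (ν l : G)) 0

/-- `N`-equivariance of a `V`-valued function of `G`-tuples. -/
def NEqv {m : ℕ} (H : (Fin m → G) → V) : Prop :=
  ∀ (ν : MonoidHom.ker φ) (x : Fin m → G),
    H (fun l => (ν : G) * x l) = ρM (ν : G) (H x)

theorem nEqv_frob {m : ℕ} (H : (Fin m → G) → V) (hH : NEqv φ ρM H) :
    Eqv (rX φ ρM) (Frob φ hφ ρM H) := by
  intro g x
  funext a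
  show ρM (sec φ hφ a) (H fun l => (sec φ hφ a)⁻¹ * (g * x l)) =
    rX φ ρM g (Frob φ hφ ρM H x) a
  rw [rX_apply]
  set b := a - tA φ g with hb
  show _ = ρM g (ρM (sec φ hφ b) (H fun l => (sec φ hφ b)⁻¹ * x l))
  set ν : MonoidHom.ker φ := ⟨(sec φ hφ a)⁻¹ * g * sec φ hφ b, mem_ker_tA φ (by
    rw [tA_mul, tA_mul, tA_inv, tA_sec, tA_sec, hb]; ring)⟩ with hν
  have harg : (fun l => (sec φ hφ a)⁻¹ * (g * x l)) =
      fun l => (ν : G) * ((sec φ hφ b)⁻¹ * x l) := by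
    funext l
    show (sec φ hφ a)⁻¹ * (g * x l) =
      (sec φ hφ a)⁻¹ * g * sec φ hφ b * ((sec φ hφ b)⁻¹ * x l)
    group
  rw [harg, hH ν]
  rw [← Module.End.mul_apply, ← map_mul, ← Module.End.mul_apply, ← map_mul]
  congr 2
  show sec φ hφ a * ((sec φ hφ a)⁻¹ * g * sec φ hφ b) = g * sec φ hφ b
  group

theorem del_comp_map {α β : Type*} {m : ℕ} (h : α → β) (i : ℕ) (x : Fin (m + 1) → α) :
    del i (fun l => h (x l)) = fun l => h (del i x l) := by
  funext l; unfold del; split <;> rfl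

theorem hD_frob {m : ℕ} (H : (Fin (m + 1) → G) → V) :
    hD (Frob φ hφ ρM H) = Frob φ hφ ρM (hD H) := by
  funext x
  funext a
  show (∑ i : Fin (m + 2), ((-1 : ℤ) ^ (i : ℕ)) • Frob φ hφ ρM H (del (i : ℕ) x)) a =
    ρM (sec φ hφ a) ((hD H) fun l => (sec φ hφ a)⁻¹ * x l)
  rw [Finset.sum_apply]
  unfold hD
  rw [map_sum]
  refine Finset.sum_congr rfl fun i _ => ?_
  rw [Pi.smul_apply, map_zsmul]
  congr 1
  show Frob φ hφ ρM H (del (i : ℕ) x) a = ρM (sec φ hφ a) (H (del (i : ℕ) fun l => (sec φ hφ a)⁻¹ * x l))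
  unfold Frob
  rw [del_comp_mul]

theorem hD_bst {m : ℕ} (HN : (Fin (m + 1) → MonoidHom.ker φ) → V) :
    hD (Bst φ hφ HN) = Bst φ hφ (hD HN) := by
  funext x
  unfold hD Bst
  refine Finset.sum_congr rfl fun i _ => ?_
  congr 1
  rw [del_comp_map (fun g => piN φ hφ g)]

theorem nEqv_bst {m : ℕ} (HN : (Fin m → MonoidHom.ker φ) → V)
    (hHN : Eqv (ρM.comp (MonoidHom.ker φ).subtype) HN) : NEqv φ ρM (Bst φ hφ HN) := by
  intro ν x
  unfold Bst
  have harg : (fun l => piN φ hφ ((ν : G) * x l)) = fun l => ν * piN φ hφ (x l) := by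
    funext l; exact piN_mul_ker φ hφ ν (x l)
  rw [harg, hHN ν]
  rfl

end Setting

end Ch

namespace Ch

section Setting2

variable {k G V : Type*} [CommRing k] [Group G] [AddCommGroup V] [Module k V]
variable {p : ℕ} [NeZero p]
variable (φ : G →* Multiplicative (ZMod p)) (hφ : Function.Surjective φ)
variable (ρM : Representation k G V)

theorem tA_sec_inv (a : ZMod p) : tA φ ((sec φ hφ a)⁻¹) = -a := by
  rw [tA_inv, tA_sec]

theorem diffs_coe {m : ℕ} (ν : Fin (m + 1) → MonoidHom.ker φ) :
    diffs (fun l => ((ν l : G))) = fun i => ((diffs ν i : MonoidHom.ker φ) : G) := by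
  funext i
  show ((ν i.castSucc : G))⁻¹ * (ν i.succ : G) = ((((ν i.castSucc)⁻¹ * ν i.succ : MonoidHom.ker φ)) : G)
  rfl

theorem contractNth_coe {m : ℕ} (j : Fin (m + 1)) (ν : Fin (m + 1) → MonoidHom.ker φ) :
    (fun i => ((Fin.contractNth j (· * ·) ν i : MonoidHom.ker φ) : G)) =
      Fin.contractNth j (· * ·) (fun l => ((ν l : G))) := by
  funext i
  rcases lt_trichotomy (i : ℕ) (j : ℕ) with h | h | h
  · rw [Fin.contractNth_apply_of_lt _ _ _ _ h, Fin.contractNth_apply_of_lt _ _ _ _ h]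
  · rw [Fin.contractNth_apply_of_eq _ _ _ _ h, Fin.contractNth_apply_of_eq _ _ _ _ h]
    rfl
  · rw [Fin.contractNth_apply_of_gt _ _ _ _ h, Fin.contractNth_apply_of_gt _ _ _ _ h]

/-- `resC` intertwines `fromI`. -/
theorem resC_fromI {m : ℕ} (f : (Fin m → G) → ZMod p → V) :
    resC φ (fromI (rX φ ρM) f) =
      fromI (ρM.comp (MonoidHom.ker φ).subtype) (resC φ f) := by
  funext ν
  show rX φ ρM ((ν 0 : G)) (f (diffs fun l => ((ν l : G)))) 0 =
    ρM ((ν 0 : G)) (f (fun l => ((diffs ν l : MonoidHom.ker φ) : G)) 0)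
  rw [rX_apply, tA_ker, sub_zero, diffs_coe]

/-- `resC` is a chain map. -/
theorem resC_dC {n : ℕ} (f : (Fin n → G) → ZMod p → V) :
    dC (ρM.comp (MonoidHom.ker φ).subtype) (resC φ f) = resC φ (dC (rX φ ρM) f) := by
  funext ν
  show ρM ((ν 0 : G)) (resC φ f fun i => ν i.succ) + _ = (dC (rX φ ρM) f) (fun l => ((ν l : G))) 0
  unfold dC
  rw [Pi.add_apply, Finset.sum_apply]
  congr 1
  · show ρM ((ν 0 : G)) (f (fun i => ((ν i.succ : G))) 0) =
      rX φ ρM ((ν 0 : G)) (f fun i => ((ν i.succ : G))) 0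
    rw [rX_apply, tA_ker, sub_zero]
  · refine Finset.sum_congr rfl fun j _ => ?_
    rw [Pi.smul_apply]
    congr 1
    show f (fun i => ((Fin.contractNth j (· * ·) ν i : MonoidHom.ker φ) : G)) 0 = _
    rw [contractNth_coe]

/-- the prism comparison maps. -/
noncomputable def ua (a : ZMod p) (g : G) : G := g * (sec φ hφ (tA φ g - a))⁻¹

noncomputable def PrX {m : ℕ} (F : (Fin (m + 2) → G) → ZMod p → V) (x : Fin (m + 1) → G) :
    ZMod p → V := fun a => Pr (ua φ hφ a) F x a

theorem ua_mul (a : ZMod p) (g y : G) :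
    ua φ hφ a (g * y) = g * ua φ hφ (a - tA φ g) y := by
  unfold ua
  rw [tA_mul, mul_assoc]
  congr 3
  ring

theorem pr_ua_mul {m : ℕ} (a : ZMod p) (g : G) (i : ℕ) (x : Fin (m + 1) → G) :
    pr (ua φ hφ a) i (fun l => g * x l) = fun l => g * pr (ua φ hφ (a - tA φ g)) i x l := by
  funext l
  unfold pr
  split
  · rw [ua_mul]
  · rfl

theorem eqv_PrX {m : ℕ} (F : (Fin (m + 2) → G) → ZMod p → V) (hF : Eqv (rX φ ρM) F) :
    Eqv (rX φ ρM) (PrX φ hφ F) := by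
  intro g x
  funext a
  show Pr (ua φ hφ a) F (fun l => g * x l) a = rX φ ρM g (PrX φ hφ F x) a
  rw [rX_apply]
  show _ = ρM g (Pr (ua φ hφ (a - tA φ g)) F x (a - tA φ g))
  unfold Pr
  rw [Finset.sum_apply, Finset.sum_apply, map_sum]
  refine Finset.sum_congr rfl fun i _ => ?_
  rw [Pi.smul_apply, Pi.smul_apply, map_zsmul]
  congr 1
  rw [pr_ua_mul, hF g]
  rw [rX_apply]

theorem prismX {n : ℕ} (F : (Fin (n + 2) → G) → ZMod p → V) (x : Fin (n + 2) → G) :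
    hD (PrX φ hφ F) x + PrX φ hφ (hD F) x =
      F x - fun a => F (fun l => ua φ hφ a (x l)) a := by
  funext a
  rw [Pi.add_apply, Pi.sub_apply]
  have h1 : hD (PrX φ hφ F) x a = hD (Pr (ua φ hφ a) F) x a := by
    unfold hD
    rw [Finset.sum_apply, Finset.sum_apply]
    refine Finset.sum_congr rfl fun i _ => ?_
    rw [Pi.smul_apply, Pi.smul_apply]
    rfl
  have h2 : PrX φ hφ (hD F) x a = Pr (ua φ hφ a) (hD F) x a := rfl
  rw [h1, h2, ← Pi.add_apply (hD (Pr (ua φ hφ a) F) x) (Pr (ua φ hφ a) (hD F) x),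
    prism (ua φ hφ a) F x]
  rfl

/-- identification of the `ua`-translate with `Frob ∘ Bst ∘ resC` for equivariant cochains. -/
theorem ua_eq_frob_bst_resC {m : ℕ} (F : (Fin m → G) → ZMod p → V)
    (hF : Eqv (rX φ ρM) F) (x : Fin m → G) :
    (fun a => F (fun l => ua φ hφ a (x l)) a) =
      Frob φ hφ ρM (Bst φ hφ (resC φ F)) x := by
  funext a
  show F (fun l => ua φ hφ a (x l)) a =
    ρM (sec φ hφ a) (F (fun l => ((piN φ hφ ((sec φ hφ a)⁻¹ * x l) : G))) 0)
  have harg : (fun l => ((piN φ hφ ((sec φ hφ a)⁻¹ * x l) : G))) =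
      fun l => (sec φ hφ a)⁻¹ * ua φ hφ a (x l) := by
    funext l
    show (sec φ hφ a)⁻¹ * x l * (sec φ hφ (tA φ ((sec φ hφ a)⁻¹ * x l)))⁻¹ = _
    rw [tA_mul, tA_sec_inv]
    unfold ua
    rw [mul_assoc]
    congr 3
    ring
  rw [harg, hF ((sec φ hφ a)⁻¹), rX_apply, tA_sec_inv, zero_sub, neg_neg,
    ← Module.End.mul_apply, ← map_mul, mul_inv_cancel, map_one, Module.End.one_apply]

theorem fromI_zero {W : Type*} [AddCommGroup W] [Module k W] (σ : Representation k G W)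
    {n : ℕ} : fromI σ (0 : (Fin n → G) → W) = 0 := by
  funext x
  show σ (x 0) 0 = 0
  rw [map_zero]

theorem PrX_zero {m : ℕ} : PrX φ hφ (0 : (Fin (m + 2) → G) → ZMod p → V) = 0 := by
  funext x a
  show Pr (ua φ hφ a) (0 : (Fin (m + 2) → G) → ZMod p → V) x a = (0 : ZMod p → V) a
  unfold Pr
  simp

theorem hD_add {W : Type*} [AddCommGroup W] {m : ℕ} (F F' : (Fin (m + 1) → G) → W) :
    hD (F + F') = hD F + hD F' := by
  funext x
  unfold hD
  rw [Pi.add_apply, ← Finset.sum_add_distrib]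
  refine Finset.sum_congr rfl fun i _ => ?_
  rw [Pi.add_apply, smul_add]

theorem eqv_add {W : Type*} [AddCommGroup W] [Module k W] (σ : Representation k G W)
    {n : ℕ} (F F' : (Fin n → G) → W) (hF : Eqv σ F) (hF' : Eqv σ F') :
    Eqv σ (F + F') := by
  intro g x
  rw [Pi.add_apply, Pi.add_apply, hF, hF', map_add]

/-- Shapiro's lemma at the cochain level. -/
theorem lemS (hφ : Function.Surjective ⇑φ)
    (hN : ∀ j : ℕ, 0 < j → ∀ f : (Fin j → (MonoidHom.ker φ)) → V,
      dC (ρM.comp (MonoidHom.ker φ).subtype) f = 0 →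
      IsCoboundary (ρM.comp (MonoidHom.ker φ).subtype) j f)
    {n : ℕ} (F : (Fin (n + 1) → G) → ZMod p → V) (hF : dC (rX φ ρM) F = 0) :
    ∃ E : (Fin n → G) → ZMod p → V, dC (rX φ ρM) E = F := by
  have hres : dC (ρM.comp (MonoidHom.ker φ).subtype) (resC φ F) = 0 := by
    rw [resC_dC, hF]
    funext ν; rfl
  have hcob : ∃ e : (Fin n → MonoidHom.ker φ) → V,
      dC (ρM.comp (MonoidHom.ker φ).subtype) e = resC φ F :=
    hN (n + 1) (by omega) _ hres
  obtain ⟨e, he⟩ := hcob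
  have hEqvF' : Eqv (rX φ ρM) (fromI (rX φ ρM) F) := eqv_fromI _ F
  have hhD0 : hD (fromI (rX φ ρM) F) = 0 := by
    rw [← fromI_dC _ F, hF, fromI_zero]
  have hpr := prismX φ hφ (fromI (rX φ ρM) F)
  have hkey : ∀ x, hD (PrX φ hφ (fromI (rX φ ρM) F)) x =
      fromI (rX φ ρM) F x -
        hD (Frob φ hφ ρM (Bst φ hφ (fromI (ρM.comp (MonoidHom.ker φ).subtype) e))) x := by
    intro x
    have h1 := hpr x
    rw [hhD0, PrX_zero, Pi.zero_apply, add_zero] at h1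
    rw [h1, ua_eq_frob_bst_resC φ hφ ρM _ hEqvF' x]
    congr 2
    rw [resC_fromI, ← he, fromI_dC, ← hD_bst, ← hD_frob]
  have hsum : fromI (rX φ ρM) F =
      hD (PrX φ hφ (fromI (rX φ ρM) F) +
        Frob φ hφ ρM (Bst φ hφ (fromI (ρM.comp (MonoidHom.ker φ).subtype) e))) := by
    rw [hD_add]
    funext x
    rw [Pi.add_apply]
    rw [hkey x]
    abel
  refine ⟨toI (PrX φ hφ (fromI (rX φ ρM) F) +
    Frob φ hφ ρM (Bst φ hφ (fromI (ρM.comp (MonoidHom.ker φ).subtype) e))), ?_⟩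
  rw [dC_toI _ _ (eqv_add _ _ _ (eqv_PrX φ hφ ρM _ hEqvF')
    (nEqv_frob φ hφ ρM _ (nEqv_bst φ hφ ρM _ (eqv_fromI _ e)))), ← hsum,
    toI_fromI]

end Setting2

end Ch

namespace Ch

section Conn

variable {k G V : Type*} [CommRing k] [Group G] [AddCommGroup V] [Module k V]
variable {p : ℕ} [NeZero p]
variable (φ : G →* Multiplicative (ZMod p)) (ρM : Representation k G V)

/-- constants inclusion. -/
def iota : V →+ (ZMod p → V) where
  toFun := fun v _ => v
  map_zero' := rfl
  map_add' := fun _ _ => rfl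

/-- difference operator. -/
def TT : (ZMod p → V) →+ (ZMod p → V) where
  toFun := fun q a => q (a + 1) - q a
  map_zero' := by funext a; simp
  map_add' := fun q r => by funext a; simp only [Pi.add_apply]; abel

/-- sum over the fiber. -/
def Sg : (ZMod p → V) →+ V where
  toFun := fun q => ∑ b : ZMod p, q b
  map_zero' := by simp
  map_add' := fun q r => by simp [Finset.sum_add_distrib]

theorem iota_comm (g : G) (v : V) :
    iota (ρM g v) = rX φ ρM g (iota v) := by
  funext a; rfl

theorem TT_comm (g : G) (q : ZMod p → V) :
    TT (rX φ ρM g q) = rX φ ρM g (TT q) := by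
  funext a
  show rX φ ρM g q (a + 1) - rX φ ρM g q a = ρM g (TT q (a - tA φ g))
  rw [rX_apply, rX_apply]
  show _ = ρM g (q (a - tA φ g + 1) - q (a - tA φ g))
  rw [map_sub]
  congr 2
  ring

theorem Sg_comm (g : G) (q : ZMod p → V) :
    Sg (rX φ ρM g q) = ρM g (Sg q) := by
  show ∑ b : ZMod p, ρM g (q (b - tA φ g)) = ρM g (∑ b : ZMod p, q b)
  rw [← map_sum]
  congr 1
  exact Fintype.sum_equiv (Equiv.subRight (tA φ g)) _ _ (fun b => rfl)

theorem TT_iota (v : V) : TT (iota (p := p) v) = 0 := by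
  funext a; show v - v = 0; abel

theorem Sg_TT (q : ZMod p → V) : Sg (TT q) = 0 := by
  show (∑ b : ZMod p, (q (b + 1) - q b)) = 0
  rw [Finset.sum_sub_distrib]
  rw [Fintype.sum_equiv (Equiv.addRight (1 : ZMod p)) (fun b => q (b + 1)) q (fun b => rfl)]
  abel

theorem TT_const {q : ZMod p → V} (hq : TT q = 0) : q = iota (q 0) := by
  have h1 : ∀ a : ZMod p, q (a + 1) = q a := by
    intro a
    have := congrFun hq a
    rw [Pi.zero_apply] at this
    have h2 : q (a + 1) - q a = 0 := this
    rw [sub_eq_zero] at h2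
    exact h2
  have h3 : ∀ m : ℕ, q ((m : ℕ) : ZMod p) = q 0 := by
    intro m
    induction m with
    | zero => norm_num
    | succ m ih => rw [Nat.cast_succ, h1, ih]
  funext a
  show q a = q 0
  conv_lhs => rw [show a = ((a.val : ℕ) : ZMod p) by rw [ZMod.natCast_val, ZMod.cast_id]]
  exact h3 a.val

/-- partial-sum section of `TT` on the kernel of `Sg`. -/
def Sv (q : ZMod p → V) : ZMod p → V := fun a => ∑ i ∈ Finset.range a.val, q ((i : ℕ) : ZMod p)

theorem val_add_one (hp1 : 1 < p) (a : ZMod p) :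
    (a + 1).val = if a.val = p - 1 then 0 else a.val + 1 := by
  haveI : Fact (1 < p) := ⟨hp1⟩
  rw [ZMod.val_add, ZMod.val_one]
  split
  · rename_i h
    rw [h, show p - 1 + 1 = p by omega, Nat.mod_self]
  · rename_i h
    have := ZMod.val_lt a
    exact Nat.mod_eq_of_lt (by omega)

theorem sum_range_val (q : ZMod p → V) :
    ∑ i ∈ Finset.range p, q ((i : ℕ) : ZMod p) = ∑ b : ZMod p, q b := by
  refine Finset.sum_nbij' (i := fun i => ((i : ℕ) : ZMod p)) (j := fun b => b.val)
    ?_ ?_ ?_ ?_ ?_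
  · intro i _; exact Finset.mem_univ _
  · intro b _; exact Finset.mem_range.mpr (ZMod.val_lt b)
  · intro i hi
    exact ZMod.val_natCast_of_lt (Finset.mem_range.mp hi)
  · intro b _
    show ((b.val : ℕ) : ZMod p) = b
    rw [ZMod.natCast_val, ZMod.cast_id]
  · intro i _; rfl

theorem TT_Sv (hp1 : 1 < p) {q : ZMod p → V} (hq : Sg q = 0) (a : ZMod p) :
    TT (Sv q) a = q a := by
  show Sv q (a + 1) - Sv q a = q a
  unfold Sv
  rw [val_add_one hp1]
  split
  · rename_i h
    rw [Finset.range_zero, Finset.sum_empty, zero_sub, h]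
    have hp0 : 0 < p := by omega
    have hsplit : ∑ i ∈ Finset.range p, q ((i : ℕ) : ZMod p) =
        (∑ i ∈ Finset.range (p - 1), q ((i : ℕ) : ZMod p)) + q (((p - 1 : ℕ) : ZMod p)) := by
      rw [← Finset.sum_range_succ, show p - 1 + 1 = p by omega]
    have hzero : (∑ i ∈ Finset.range (p-1), q ((i : ℕ) : ZMod p)) + q (((p - 1 : ℕ) : ZMod p)) = 0 := by
      rw [← hsplit, sum_range_val]
      exact hq
    have ha : a = ((p - 1 : ℕ) : ZMod p) := by
      conv_lhs => rw [show a = ((a.val : ℕ) : ZMod p) by rw [ZMod.natCast_val, ZMod.cast_id]]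
      rw [h]
    rw [ha]
    exact neg_eq_of_add_eq_zero_right hzero
  · rw [Finset.sum_range_succ, add_sub_cancel_left]
    congr
    rw [ZMod.natCast_val, ZMod.cast_id]

/-- the `0`-supported lift. -/
def what {n : ℕ} (f : (Fin n → G) → V) : (Fin n → G) → ZMod p → V :=
  fun x a => if a = 0 then f x else 0

/-- the explicit primitive realizing periodicity. -/
noncomputable def uhat {n : ℕ} (f : (Fin n → G) → V) : (Fin (n + 1) → G) → ZMod p → V :=
  fun x a => if 1 ≤ a.val ∧ a.val ≤ (tA φ (x 0)).val
    then -(ρM (x 0) (f fun i => x i.succ)) else 0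

theorem Sg_what {n : ℕ} (f : (Fin n → G) → V) (x : Fin n → G) :
    Sg (what (p := p) f x) = f x := by
  show (∑ b : ZMod p, if b = 0 then f x else 0) = f x
  rw [Finset.sum_ite_eq' Finset.univ (0 : ZMod p) (fun _ => f x)]
  rw [if_pos (Finset.mem_univ _)]

end Conn

end Ch

namespace Ch

section KLem

variable {k G V : Type*} [CommRing k] [Group G] [AddCommGroup V] [Module k V]
variable {p : ℕ} [NeZero p]
variable (φ : G →* Multiplicative (ZMod p)) (ρM : Representation k G V)

theorem dC_add {W : Type*} [AddCommGroup W] [Module k W] (σ : Representation k G W)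
    {n : ℕ} (F F' : (Fin n → G) → W) : dC σ (F + F') = dC σ F + dC σ F' := by
  funext x
  unfold dC
  simp only [Pi.add_apply, map_add, smul_add, Finset.sum_add_distrib]
  abel

theorem dC_neg {W : Type*} [AddCommGroup W] [Module k W] (σ : Representation k G W)
    {n : ℕ} (F : (Fin n → G) → W) : dC σ (-F) = -dC σ F := by
  funext x
  unfold dC
  simp only [Pi.neg_apply, map_neg, smul_neg, Finset.sum_neg_distrib]
  abel

theorem dC_sub {W : Type*} [AddCommGroup W] [Module k W] (σ : Representation k G W)
    {n : ℕ} (F F' : (Fin n → G) → W) : dC σ (F - F') = dC σ F - dC σ F' := by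
  rw [sub_eq_add_neg, dC_add, dC_neg, ← sub_eq_add_neg]

theorem contract_zero_head {n : ℕ} (x : Fin (n + 2) → G) :
    Fin.contractNth (0 : Fin (n + 2)) (· * ·) x 0 = x 0 * x 1 := by
  rw [Fin.contractNth_apply_of_eq _ _ _ _ (by simp), Fin.castSucc_zero, Fin.succ_zero_eq_one]

theorem contract_zero_tail {n : ℕ} (x : Fin (n + 2) → G) :
    (fun i : Fin n => Fin.contractNth (0 : Fin (n + 2)) (· * ·) x i.succ) =
      fun i => x i.succ.succ := by
  funext i
  rw [Fin.contractNth_apply_of_gt _ _ _ _ (by simp)]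

theorem contract_succ_head {n : ℕ} (m : Fin (n + 1)) (x : Fin (n + 2) → G) :
    Fin.contractNth m.succ (· * ·) x 0 = x 0 := by
  rw [Fin.contractNth_apply_of_lt _ _ _ _ (by simp), Fin.castSucc_zero]

theorem contract_succ_tail {n : ℕ} (m : Fin (n + 1)) (x : Fin (n + 2) → G) :
    (fun i : Fin n => Fin.contractNth m.succ (· * ·) x i.succ) =
      Fin.contractNth m (· * ·) (fun l : Fin (n + 1) => x l.succ) := by
  funext i
  rcases lt_trichotomy (i : ℕ) (m : ℕ) with h | h | h
  · rw [Fin.contractNth_apply_of_lt _ _ _ _ (by simp [Fin.val_succ]; omega),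
      Fin.contractNth_apply_of_lt _ _ _ _ h, Fin.castSucc_fin_succ]
  · rw [Fin.contractNth_apply_of_eq _ _ _ _ (by simp [Fin.val_succ]; omega),
      Fin.contractNth_apply_of_eq _ _ _ _ h, Fin.castSucc_fin_succ]
  · rw [Fin.contractNth_apply_of_gt _ _ _ _ (by simp [Fin.val_succ]; omega),
      Fin.contractNth_apply_of_gt _ _ _ _ h]

theorem mod_cases {x y : ℕ} (hx : x < p) (hy : y < p) :
    (x + y) % p = if x + y < p then x + y else x + y - p := by
  split
  · exact Nat.mod_eq_of_lt (by omega)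
  · rw [Nat.mod_eq_sub_mod (by omega), Nat.mod_eq_of_lt (by omega)]

theorem div_cases {x y : ℕ} (hx : x < p) (hy : y < p) :
    (x + y) / p = if x + y < p then 0 else 1 := by
  have hp0 : 0 < p := Nat.pos_of_ne_zero (NeZero.ne p)
  split
  · exact Nat.div_eq_of_lt (by omega)
  · rw [Nat.div_eq_sub_div hp0 (by omega), Nat.div_eq_of_lt (by omega)]

theorem K1 (hp1 : 1 < p) {n : ℕ} (f : (Fin n → G) → V) (hf : dC ρM f = 0)
    (x : Fin (n + 1) → G) (a : ZMod p) :
    TT (uhat φ ρM f x) a = dC (rX φ ρM) (what (p := p) f) x a := by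
  have hx0 := congrFun hf x
  rw [Pi.zero_apply] at hx0
  set w := ρM (x 0) (f fun i => x i.succ) with hw
  have hadd : w + (∑ j : Fin (n + 1), ((-1:ℤ) ^ ((j:ℕ)+1)) • f (Fin.contractNth j (· * ·) x)) = 0 := hx0
  have hsum : (∑ j : Fin (n + 1), ((-1:ℤ) ^ ((j:ℕ)+1)) • f (Fin.contractNth j (· * ·) x)) = -w :=
    eq_neg_of_add_eq_zero_right hadd
  have hR : dC (rX φ ρM) (what (p := p) f) x a =
      (if a = tA φ (x 0) then w else 0) - (if a = 0 then w else 0) := by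
    show (rX φ ρM (x 0) (what (p := p) f fun i => x i.succ) +
      ∑ j : Fin (n+1), ((-1:ℤ)^((j:ℕ)+1)) • what (p := p) f (Fin.contractNth j (· * ·) x)) a = _
    rw [Pi.add_apply, Finset.sum_apply]
    have h1 : rX φ ρM (x 0) (what (p := p) f fun i => x i.succ) a
        = if a = tA φ (x 0) then w else 0 := by
      rw [rX_apply]
      show ρM (x 0) (if a - tA φ (x 0) = 0 then f (fun i => x i.succ) else 0) = _
      rw [apply_ite (ρM (x 0)), map_zero]
      simp only [sub_eq_zero]
      rfl
    have h2 : (∑ j : Fin (n+1), (((-1:ℤ)^((j:ℕ)+1)) • what (p := p) f (Fin.contractNth j (· * ·) x)) a)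
        = if a = 0 then -w else 0 := by
      by_cases h0 : a = 0
      · subst h0
        rw [if_pos rfl, ← hsum]
        refine Finset.sum_congr rfl fun j _ => ?_
        rw [Pi.smul_apply]
        congr 1
        simp [what]
      · rw [if_neg h0]
        refine Finset.sum_eq_zero fun j _ => ?_
        rw [Pi.smul_apply]
        simp [what, h0]
    rw [h1, h2]
    split_ifs <;> abel
  rw [hR]
  show uhat φ ρM f x (a + 1) - uhat φ ρM f x a = _
  unfold uhat
  have hva := ZMod.val_lt a
  have hvb := ZMod.val_lt (tA φ (x 0))
  have hiff1 : (a = tA φ (x 0)) ↔ a.val = (tA φ (x 0)).val :=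
    ⟨fun h => by rw [h], fun h => ZMod.val_injective p h⟩
  have hiff2 : (a = 0) ↔ a.val = 0 := (ZMod.val_eq_zero a).symm
  rw [val_add_one hp1]
  simp only [hiff1, hiff2, hw]
  split_ifs <;> first | (exfalso; omega) | abel1

end KLem

end Ch

namespace Ch

section KLem2

variable {k G V : Type*} [CommRing k] [Group G] [AddCommGroup V] [Module k V]
variable {p : ℕ} [NeZero p]
variable (φ : G →* Multiplicative (ZMod p)) (ρM : Representation k G V)

theorem K2 {n : ℕ} (f : (Fin n → G) → V) (hf : dC ρM f = 0)
    (x : Fin (n + 2) → G) (a : ZMod p) :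
    dC (rX φ ρM) (uhat φ ρM f) x a =
      -(((((tA φ (x 0)).val + (tA φ (x 1)).val) / p : ℕ) : ℤ) •
        ρM (x 0 * x 1) (f fun i => x i.succ.succ)) := by
  set w := ρM (x 0 * x 1) (f fun i => x i.succ.succ) with hw
  have htail0 : dC ρM f (fun l : Fin (n + 1) => x l.succ) = 0 := by
    rw [hf]; rfl
  have hadd : ρM (x (0 : Fin (n + 1)).succ) (f fun i => x i.succ.succ) +
      ∑ j : Fin (n + 1), ((-1:ℤ) ^ ((j:ℕ)+1)) •
        f (Fin.contractNth j (· * ·) fun l : Fin (n + 1) => x l.succ) = 0 := htail0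
  rw [Fin.succ_zero_eq_one] at hadd
  have hsum : ∑ j : Fin (n + 1), ((-1:ℤ) ^ ((j:ℕ)+1)) •
      f (Fin.contractNth j (· * ·) fun l : Fin (n + 1) => x l.succ) =
      -(ρM (x 1) (f fun i => x i.succ.succ)) :=
    eq_neg_of_add_eq_zero_right hadd
  show (rX φ ρM (x 0) (uhat φ ρM f fun i => x i.succ) +
    ∑ j : Fin (n + 2), ((-1:ℤ) ^ ((j:ℕ)+1)) • uhat φ ρM f (Fin.contractNth j (· * ·) x)) a = _
  rw [Pi.add_apply, Finset.sum_apply]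
  have h1 : rX φ ρM (x 0) (uhat φ ρM f fun i => x i.succ) a =
      if 1 ≤ (a - tA φ (x 0)).val ∧ (a - tA φ (x 0)).val ≤ (tA φ (x 1)).val
        then -w else 0 := by
    rw [rX_apply]
    show ρM (x 0) (if 1 ≤ (a - tA φ (x 0)).val ∧
        (a - tA φ (x 0)).val ≤ (tA φ (x (0 : Fin (n + 1)).succ)).val
      then -(ρM (x (0 : Fin (n + 1)).succ) (f fun i => x i.succ.succ)) else 0) = _
    rw [Fin.succ_zero_eq_one]
    rw [apply_ite (ρM (x 0)), map_zero, map_neg, ← Module.End.mul_apply, ← map_mul]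
  rw [Fin.sum_univ_succ
    (f := fun j : Fin (n + 2) => (((-1:ℤ) ^ ((j:ℕ)+1)) • uhat φ ρM f (Fin.contractNth j (· * ·) x)) a)]
  have h0 : (((-1:ℤ) ^ (((0 : Fin (n + 2)):ℕ)+1)) •
      uhat φ ρM f (Fin.contractNth (0 : Fin (n + 2)) (· * ·) x)) a =
      if 1 ≤ a.val ∧ a.val ≤ (tA φ (x 0 * x 1)).val then w else 0 := by
    rw [Pi.smul_apply]
    show ((-1:ℤ) ^ (((0 : Fin (n + 2)):ℕ)+1)) • (if 1 ≤ a.val ∧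
        a.val ≤ (tA φ (Fin.contractNth (0 : Fin (n + 2)) (· * ·) x 0)).val
      then -(ρM (Fin.contractNth (0 : Fin (n + 2)) (· * ·) x 0)
        (f fun i => Fin.contractNth (0 : Fin (n + 2)) (· * ·) x i.succ)) else 0) = _
    rw [contract_zero_head, contract_zero_tail]
    split_ifs
    · simp only [Fin.val_zero, zero_add, pow_one, neg_smul, one_smul, neg_neg]
      rfl
    · simp only [smul_zero]
  have hm : ∀ m : Fin (n + 1), (((-1:ℤ) ^ (((m.succ : Fin (n + 2)):ℕ)+1)) •
      uhat φ ρM f (Fin.contractNth m.succ (· * ·) x)) a =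
      ((-1:ℤ) ^ ((m:ℕ)+2)) • (if 1 ≤ a.val ∧ a.val ≤ (tA φ (x 0)).val
        then -(ρM (x 0) (f (Fin.contractNth m (· * ·) fun l : Fin (n + 1) => x l.succ))) else 0) := by
    intro m
    rw [Pi.smul_apply, Fin.val_succ]
    congr 1
    show (if 1 ≤ a.val ∧ a.val ≤ (tA φ (Fin.contractNth m.succ (· * ·) x 0)).val
      then -(ρM (Fin.contractNth m.succ (· * ·) x 0)
        (f fun i => Fin.contractNth m.succ (· * ·) x i.succ)) else 0) = _
    rw [contract_succ_head, contract_succ_tail]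
  have hrest : ∑ m : Fin (n + 1), ((-1:ℤ) ^ ((m:ℕ)+2)) •
      (if 1 ≤ a.val ∧ a.val ≤ (tA φ (x 0)).val
        then -(ρM (x 0) (f (Fin.contractNth m (· * ·) fun l : Fin (n + 1) => x l.succ))) else 0) =
      if 1 ≤ a.val ∧ a.val ≤ (tA φ (x 0)).val then -w else 0 := by
    by_cases hB : 1 ≤ a.val ∧ a.val ≤ (tA φ (x 0)).val
    · simp only [if_pos hB]
      have hterm : ∀ m : Fin (n + 1), ((-1:ℤ) ^ ((m:ℕ)+2)) •
          (-(ρM (x 0) (f (Fin.contractNth m (· * ·) fun l : Fin (n + 1) => x l.succ)))) =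
          ρM (x 0) (((-1:ℤ) ^ ((m:ℕ)+1)) •
            f (Fin.contractNth m (· * ·) fun l : Fin (n + 1) => x l.succ)) := by
        intro m
        rw [map_zsmul,
          show ((-1:ℤ) ^ ((m:ℕ)+2)) = -((-1:ℤ) ^ ((m:ℕ)+1)) by rw [pow_succ]; ring,
          neg_smul, smul_neg, neg_neg]
      simp only [hterm]
      rw [← map_sum, hsum, map_neg, ← Module.End.mul_apply, ← map_mul]
    · simp only [if_neg hB, smul_zero, Finset.sum_const_zero]
  rw [h1, h0]
  simp only [hm]
  rw [hrest]
  obtain ⟨c, rfl⟩ : ∃ c : ZMod p, a = c + tA φ (x 0) :=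
    ⟨a - tA φ (x 0), (sub_add_cancel a (tA φ (x 0))).symm⟩
  rw [add_sub_cancel_right]
  rw [tA_mul]
  have hvB : (tA φ (x 0)).val < p := ZMod.val_lt _
  have hvC : (tA φ (x 1)).val < p := ZMod.val_lt _
  have hvD : c.val < p := ZMod.val_lt _
  have hA : (c + tA φ (x 0)).val =
      if c.val + (tA φ (x 0)).val < p then c.val + (tA φ (x 0)).val
      else c.val + (tA φ (x 0)).val - p := by
    rw [ZMod.val_add]; exact mod_cases hvD hvB
  have hE : (tA φ (x 0) + tA φ (x 1)).val =
      if (tA φ (x 0)).val + (tA φ (x 1)).val < p then (tA φ (x 0)).val + (tA φ (x 1)).val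
      else (tA φ (x 0)).val + (tA φ (x 1)).val - p := by
    rw [ZMod.val_add]; exact mod_cases hvB hvC
  have hdiv : ((tA φ (x 0)).val + (tA φ (x 1)).val) / p =
      if (tA φ (x 0)).val + (tA φ (x 1)).val < p then 0 else 1 := div_cases hvB hvC
  rw [hA, hE, hdiv]
  split_ifs <;>
    first
      | (exfalso; omega)
      | (simp only [Nat.cast_zero, Nat.cast_one, zero_smul, one_smul, neg_zero]; abel1)

end KLem2

end Ch

namespace Ch

section CupEval

variable {k G V : Type*} [CommRing k] [Group G] [AddCommGroup V] [Module k V]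
variable {p : ℕ} [NeZero p]
variable (φ : G →* Multiplicative (ZMod p)) (ρM : Representation k G V)

theorem cup_eval {j : ℕ} (f : (Fin j → G) → V) :
    ccast (Nat.add_comm 2 j)
      (cupSMul ρM (fun x : Fin 2 → G =>
        ((((Multiplicative.toAdd (φ (x 0))).val +
            (Multiplicative.toAdd (φ (x 1))).val) / p : ℕ) : k)) f) =
    fun x : Fin (j + 2) → G =>
      ((((tA φ (x 0)).val + (tA φ (x 1)).val) / p : ℕ) : k) •
        ρM (x 0 * x 1) (f fun i => x i.succ.succ) := by
  funext x
  unfold ccast cupSMul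
  simp only [List.ofFn_succ, List.ofFn_zero, List.prod_cons, List.prod_nil, mul_one,
    Fin.succ_zero_eq_one]
  have e0 : Fin.cast (Nat.add_comm 2 j) (Fin.castAdd j (0 : Fin 2)) =
      (0 : Fin (j + 2)) := by
    apply Fin.ext; simp
  have e1 : Fin.cast (Nat.add_comm 2 j) (Fin.castAdd j (1 : Fin 2)) =
      (1 : Fin (j + 2)) := by
    apply Fin.ext; simp
  have e2 : (fun i : Fin j => x (Fin.cast (Nat.add_comm 2 j) (Fin.natAdd 2 i))) =
      fun i => x i.succ.succ := by
    funext i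
    congr 1
    apply Fin.ext
    simp only [Fin.coe_cast, Fin.coe_natAdd, Fin.val_succ]
    omega
  rw [e0, e1, e2]
  rfl

end CupEval

end Ch


open Ch in
theorem stmt11 (k : Type*) [Field k] (p : ℕ) [Fact p.Prime] [CharP k p]
    (G : Type*) [Group G] [Finite G]
    (φ : G →* Multiplicative (ZMod p)) (hφ : Function.Surjective φ)
    (V : Type*) [AddCommGroup V] [Module k V] (ρM : Representation k G V)
    (hN : ∀ j : ℕ, 0 < j → ∀ f : (Fin j → (MonoidHom.ker φ)) → V,
      dC (ρM.comp (MonoidHom.ker φ).subtype) f = 0 →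
      IsCoboundary (ρM.comp (MonoidHom.ker φ).subtype) j f) :
    ∀ j : ℕ, 0 < j →
      (∀ f : (Fin j → G) → V, dC ρM f = 0 →
        IsCoboundary ρM (j + 2)
          (ccast (by omega)
            (cupSMul ρM
              (fun x : Fin 2 → G =>
                ((((Multiplicative.toAdd (φ (x 0))).val +
                    (Multiplicative.toAdd (φ (x 1))).val) / p : ℕ) : k))
              f)) →
        IsCoboundary ρM j f) ∧
      (∀ h : (Fin (j + 2) → G) → V, dC ρM h = 0 →
        ∃ f : (Fin j → G) → V, dC ρM f = 0 ∧
          IsCoboundary ρM (j + 2)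
            (ccast (by omega)
              (cupSMul ρM
                (fun x : Fin 2 → G =>
                  ((((Multiplicative.toAdd (φ (x 0))).val +
                      (Multiplicative.toAdd (φ (x 1))).val) / p : ℕ) : k))
                f) - h)) := by
  haveI : NeZero p := ⟨(Fact.out : p.Prime).ne_zero⟩
  have hp1 : 1 < p := (Fact.out : p.Prime).one_lt
  have hbridge : ∀ (c : ℕ) (v : V), ((c : ℕ) : k) • v = ((c : ℕ) : ℤ) • v := by
    intro c v
    rw [Nat.cast_smul_eq_nsmul, natCast_zsmul]
  intro j hj
  obtain ⟨j', rfl⟩ : ∃ j', j = j' + 1 := ⟨j - 1, by omega⟩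
  constructor
  · -- injectivity
    intro f hf hcb
    obtain ⟨E1, hE1⟩ := hcb
    rw [cup_eval φ ρM f] at hE1
    have hP : dC (rX φ ρM) (uhat φ ρM f + fun y => iota (E1 y)) = 0 := by
      rw [dC_add]
      funext x a
      rw [Pi.add_apply, Pi.add_apply, K2 φ ρM f hf x a,
        dC_post ρM (rX φ ρM) iota (iota_comm φ ρM) E1, hE1]
      have hz : -(((((tA φ (x 0)).val + (tA φ (x 1)).val) / p : ℕ) : ℤ) •
            (ρM (x 0 * x 1)) (f fun i => x i.succ.succ)) +
          ((((tA φ (x 0)).val + (tA φ (x 1)).val) / p : ℕ) : k) •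
            (ρM (x 0 * x 1)) (f fun i => x i.succ.succ) = 0 := by
        rw [hbridge]
        abel1
      exact hz
    obtain ⟨W, hW⟩ := lemS φ ρM hφ hN (uhat φ ρM f + fun y => iota (E1 y)) hP
    have hWx : ∀ x, dC (rX φ ρM) W x = uhat φ ρM f x + iota (E1 x) :=
      fun x => congrFun hW x
    have hTP : ∀ x, TT (uhat φ ρM f x + iota (E1 x)) =
        dC (rX φ ρM) (what (p := p) f) x := by
      intro x
      rw [map_add, TT_iota, add_zero]
      funext a
      exact K1 φ ρM hp1 f hf x a
    have hQ : dC (rX φ ρM) (fun y => TT (W y) - what (p := p) f y) = 0 := by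
      have hs : (fun y => TT (W y) - what (p := p) f y) =
          (fun y => TT (W y)) - what (p := p) f := rfl
      rw [hs, dC_sub, dC_post (rX φ ρM) (rX φ ρM) TT (TT_comm φ ρM) W]
      funext x
      show TT (dC (rX φ ρM) W x) - dC (rX φ ρM) (what (p := p) f) x = 0
      rw [hWx x, hTP x]
      exact sub_self _
    obtain ⟨U, hU⟩ := lemS φ ρM hφ hN (fun y => TT (W y) - what (p := p) f y) hQ
    have hUx : ∀ x, dC (rX φ ρM) U x = TT (W x) - what (p := p) f x :=
      fun x => congrFun hU x
    show ∃ E : (Fin j' → G) → V, dC ρM E = f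
    refine ⟨fun y => -(Sg (U y)), ?_⟩
    have hneg : (fun y : Fin j' → G => -(Sg (U y))) = -(fun y => Sg (U y)) := rfl
    rw [hneg, dC_neg, dC_post (rX φ ρM) ρM Sg (Sg_comm φ ρM) U]
    funext x
    show -(Sg (dC (rX φ ρM) U x)) = f x
    rw [hUx x, map_sub, Sg_TT, Sg_what, zero_sub, neg_neg]
  · -- surjectivity
    intro h hh
    have hic : dC (rX φ ρM) (fun y => iota (h y)) = 0 := by
      rw [dC_post ρM (rX φ ρM) iota (iota_comm φ ρM) h, hh]
      funext x
      simp
    obtain ⟨u1, hu1⟩ := lemS φ ρM hφ hN (fun y => iota (h y)) hic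
    have hu1x : ∀ x, dC (rX φ ρM) u1 x = iota (h x) := fun x => congrFun hu1 x
    have hTu1 : dC (rX φ ρM) (fun y => TT (u1 y)) = 0 := by
      rw [dC_post (rX φ ρM) (rX φ ρM) TT (TT_comm φ ρM) u1]
      funext x
      show TT (dC (rX φ ρM) u1 x) = 0
      rw [hu1x x, TT_iota]
    obtain ⟨w1, hw1⟩ := lemS φ ρM hφ hN (fun y => TT (u1 y)) hTu1
    have hw1x : ∀ x, dC (rX φ ρM) w1 x = TT (u1 x) := fun x => congrFun hw1 x
    set f : (Fin (j' + 1) → G) → V := fun y => -(Sg (w1 y)) with hfdef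
    have hfc : dC ρM f = 0 := by
      have hneg : f = -(fun y => Sg (w1 y)) := rfl
      rw [hneg, dC_neg, dC_post (rX φ ρM) ρM Sg (Sg_comm φ ρM) w1]
      funext x
      show -(Sg (dC (rX φ ρM) w1 x)) = 0
      rw [hw1x x, Sg_TT, neg_zero]
    refine ⟨f, hfc, ?_⟩
    rw [cup_eval φ ρM f]
    set Q : (Fin (j' + 1) → G) → ZMod p → V := fun y => what (p := p) f y + w1 y with hQdef
    have hQ0 : ∀ y, Sg (Q y) = 0 := by
      intro y
      show Sg (what (p := p) f y + w1 y) = 0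
      rw [map_add, Sg_what]
      show -(Sg (w1 y)) + Sg (w1 y) = 0
      abel1
    set W2 : (Fin (j' + 1) → G) → ZMod p → V := fun y => Sv (Q y) with hW2def
    have hTW2 : ∀ y, TT (W2 y) = Q y := fun y => funext fun a => TT_Sv hp1 (hQ0 y) a
    set R : (Fin (j' + 2) → G) → ZMod p → V :=
      fun y => uhat φ ρM f y + u1 y - dC (rX φ ρM) W2 y with hRdef
    have hTR : ∀ y, TT (R y) = 0 := by
      intro y
      show TT (uhat φ ρM f y + u1 y - dC (rX φ ρM) W2 y) = 0
      rw [map_sub, map_add]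
      have e1 : TT (uhat φ ρM f y) = dC (rX φ ρM) (what (p := p) f) y :=
        funext fun a => K1 φ ρM hp1 f hfc y a
      have e2 : TT (dC (rX φ ρM) W2 y) = dC (rX φ ρM) (fun y' => TT (W2 y')) y :=
        (congrFun (dC_post (rX φ ρM) (rX φ ρM) TT (TT_comm φ ρM) W2) y).symm
      have e3 : (fun y' => TT (W2 y')) = Q := funext hTW2
      have e4 : dC (rX φ ρM) Q y =
          dC (rX φ ρM) (what (p := p) f) y + dC (rX φ ρM) w1 y := by
        have hsp : Q = what (p := p) f + w1 := rfl
        rw [hsp, dC_add, Pi.add_apply]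
      rw [e1, e2, e3, e4, hw1x y]
      abel1
    set E : (Fin (j' + 2) → G) → V := fun y => R y 0 with hEdef
    have hiE : (fun y => iota (E y)) = R := by
      funext y
      exact (TT_const (hTR y)).symm
    have hdR : dC (rX φ ρM) R = fun x => iota (dC ρM E x) := by
      rw [← hiE]
      exact dC_post ρM (rX φ ρM) iota (iota_comm φ ρM) E
    have hdR2 : ∀ x a, dC (rX φ ρM) R x a =
        -(((((tA φ (x 0)).val + (tA φ (x 1)).val) / p : ℕ) : ℤ) •
          ρM (x 0 * x 1) (f fun i => x i.succ.succ)) + h x := by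
      intro x a
      have hsplit : R = (uhat φ ρM f + u1) - dC (rX φ ρM) W2 := rfl
      rw [hsplit, dC_sub, dC_add, dC_dC]
      show dC (rX φ ρM) (uhat φ ρM f) x a + dC (rX φ ρM) u1 x a - (0 : ZMod p → V) a = _
      rw [K2 φ ρM f hfc x a, hu1x x]
      show _ + h x - (0 : V) = _
      rw [sub_zero]
    have hE2 : ∀ x, dC ρM E x =
        -(((((tA φ (x 0)).val + (tA φ (x 1)).val) / p : ℕ) : ℤ) •
          ρM (x 0 * x 1) (f fun i => x i.succ.succ)) + h x := by
      intro x
      have h1 := congrFun (congrFun hdR x) 0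
      have h2 := hdR2 x 0
      rw [h1] at h2
      exact h2
    show ∃ E' : (Fin (j' + 2) → G) → V, dC ρM E' = _
    refine ⟨-E, ?_⟩
    rw [dC_neg]
    funext x
    show -(dC ρM E x) = ((((tA φ (x 0)).val + (tA φ (x 1)).val) / p : ℕ) : k) •
      ρM (x 0 * x 1) (f fun i => x i.succ.succ) - h x
    rw [hE2 x, hbridge]
    abel1
end
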